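/- arXiv:1404.0715 — 9 statements merged into one kernel-verified Lean document; each statement's English description precedes it below -/
import Mathlib

section
/- Let g be a finite-dimensional simple Lie algebra with sl2-triple {e,h=2x,f} and r ∈ g_{≥0}. The map ad(f+r) restricted to [e,g] is injective, hence a bijection from [e,g] onto [f+r,[e,g]]. -/
/-!
Pass to an algebraic closure and put `h = 2x`. Since `⁅h, e⁆ = 2e`, the image `[e, g]` is
`ad h`-stable, so a nonzero `y ∈ [e, g]` with `⁅f + r, y⁆ = 0` splits into generalized
`ad h`-eigencomponents `y_ν ∈ [e, g]`. Pick a weight `ν₀` of `y` such that no `ν₀ - q` with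
`q ∈ ℚ_{>0}` is a weight. As `f` lowers weights by `2` and `r` raises them by nonnegative
rationals, the `ν₀ - 2` component of `⁅f + r, y⁆` is `⁅f, y_{ν₀}⁆`, so
`y_{ν₀} ∈ ker (ad f) ∩ [e, g]`.

That intersection is zero in any finite-dimensional `sl₂`-module. If `f (e w) = 0` and `e w ≠ 0`,
some generalized weight component `w_ν` of `w` has `e w_ν ≠ 0`. Then `ker f` has a weight vector of
weight `ν + 2`, a lowest weight vector, so `-(ν + 2) ∈ ℕ`; and `ker (f ∘ e)` has one of weight
`ν`, whose `f`-string obeys the recursion of a primitive vector, so `ν ∈ ℕ`.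
-/

open LieModule LieAlgebra

lemma Finset.exists_forall_sub_ratCast_notMem {K : Type*} [DivisionRing K] [CharZero K]
    {s : Finset K} (hs : s.Nonempty) : ∃ ν ∈ s, ∀ q : ℚ, 0 < q → ν - q ∉ s := by
  obtain ⟨ν₁, hν₁⟩ := hs
  let S : Finset ℚ := s.preimage (fun q : ℚ ↦ ν₁ + q) fun a _ b _ hab ↦ by simpa using hab
  have mem_S {q : ℚ} : q ∈ S ↔ ν₁ + q ∈ s := Finset.mem_preimage
  have hS : S.Nonempty := ⟨0, mem_S.mpr (by simpa using hν₁)⟩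
  refine ⟨ν₁ + (S.min' hS : ℚ), mem_S.mp (S.min'_mem hS), fun q hq hmem ↦ ?_⟩
  have : S.min' hS - q ∈ S := mem_S.mpr (by simpa [add_sub_assoc] using hmem)
  linarith [S.min'_le _ this]

namespace Module.End

variable {R M : Type*} [CommRing R] [AddCommGroup M] [Module R M]

lemma exists_hasEigenvector_of_inf_maxGenEigenspace_ne_bot {φ : End R M} {p : Submodule R M}
    {μ : R} (hφp : ∀ v ∈ p, φ v ∈ p) (hp : p ⊓ φ.maxGenEigenspace μ ≠ ⊥) :
    ∃ v ∈ p, φ.HasEigenvector μ v := by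
  rw [Submodule.inf_genEigenspace φ p hφp] at hp
  have : HasEigenvalue (φ.restrict hφp) μ :=
    (hasUnifEigenvalue_iff_hasUnifEigenvalue_one ENat.top_pos).mp fun h0 ↦ hp (by
      rw [h0, Submodule.map_bot])
  obtain ⟨v, hv⟩ := this.exists_hasEigenvector
  refine ⟨v, v.2, ?_, by simpa using hv.2⟩
  exact eigenspace_restrict_le_eigenspace φ hφp μ ⟨v, hv.1, rfl⟩

lemma exists_finsupp_mem_inf_maxGenEigenspace {K V : Type*} [Field K] [AddCommGroup V]
    [Module K V] [FiniteDimensional K V] {φ : End K V} (hφ : ⨆ μ, φ.maxGenEigenspace μ = ⊤)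
    {p : Submodule K V} (hφp : ∀ v ∈ p, φ v ∈ p) {v : V} (hv : v ∈ p) :
    ∃ c : K →₀ V, (∀ μ, c μ ∈ p ⊓ φ.maxGenEigenspace μ) ∧ c.sum (fun _ w ↦ w) = v :=
  (Submodule.mem_iSup_iff_exists_finsupp _ _).mp (Submodule.eq_iSup_inf_genEigenspace ⊤ hφp hφ ▸ hv)

end Module.End

section WeightShift

variable {R L M : Type*} [CommRing R] [LieRing L] [LieAlgebra R L] [AddCommGroup M] [Module R M]
  [LieRingModule L M] [LieModule R L M] {x b : L} {c μ : R}

lemma toEnd_sub_smul_pow_lie (hb : ⁅x, b⁆ = c • b) (k : ℕ) (m : M) :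
    ((toEnd R L M x - (μ + c) • 1) ^ k) ⁅b, m⁆ = ⁅b, ((toEnd R L M x - μ • 1) ^ k) m⁆ := by
  induction k generalizing m with
  | zero => simp
  | succ k ih =>
    rw [pow_succ, Module.End.mul_apply, pow_succ, Module.End.mul_apply, ← ih]
    congr 1
    simp only [LinearMap.sub_apply, LinearMap.smul_apply, Module.End.one_apply, toEnd_apply_apply,
      leibniz_lie x b m, hb, smul_lie, lie_sub, lie_smul]
    module

lemma lie_mem_maxGenEigenspace_add (hb : ⁅x, b⁆ = c • b) {m : M}
    (hm : m ∈ (toEnd R L M x).maxGenEigenspace μ) :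
    ⁅b, m⁆ ∈ (toEnd R L M x).maxGenEigenspace (μ + c) := by
  rw [Module.End.mem_maxGenEigenspace] at hm ⊢
  obtain ⟨k, hk⟩ := hm
  exact ⟨k, by rw [toEnd_sub_smul_pow_lie hb, hk, lie_zero]⟩

lemma lie_mem_iSup_maxGenEigenspace_add {ι : Type*} {P : ι → Prop} {w : ι → R} {r : L}
    (hr : r ∈ ⨆ i, ⨆ _ : P i, (ad R L x).eigenspace (w i)) {m : M}
    (hm : m ∈ (toEnd R L M x).maxGenEigenspace μ) :
    ⁅r, m⁆ ∈ ⨆ i, ⨆ _ : P i, (toEnd R L M x).maxGenEigenspace (μ + w i) := by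
  induction hr using Submodule.iSup_induction' with
  | mem i r hr =>
    induction hr using Submodule.iSup_induction' with
    | mem hi r hr =>
      refine Submodule.mem_iSup_of_mem i (Submodule.mem_iSup_of_mem hi ?_)
      exact lie_mem_maxGenEigenspace_add (Module.End.mem_eigenspace_iff.mp hr) hm
    | zero => simp
    | add r s _ _ hr hs => rw [add_lie]; exact add_mem hr hs
  | zero => simp
  | add r s _ _ hr hs => rw [add_lie]; exact add_mem hr hs

end WeightShift

lemma eigenspace_ad_le_eigenspace_ad_smul {R L : Type*} [CommRing R] [LieRing L] [LieAlgebra R L]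
    (x : L) (c μ : R) : (ad R L x).eigenspace μ ≤ (ad R L (c • x)).eigenspace (c * μ) := by
  intro v hv
  rw [Module.End.mem_eigenspace_iff, ad_apply] at hv ⊢
  rw [smul_lie, hv, smul_smul]

section LowestWeight

variable {K L M : Type*} [Field K] [CharZero K] [LieRing L] [LieAlgebra K L] [AddCommGroup M]
  [Module K M] [LieRingModule L M] [LieModule K L M] {h f r : L}

lemma lie_apply_eq_zero_of_lie_add_sum_eq_zero (hf : ⁅h, f⁆ = (-2 : K) • f)
    (hr : r ∈ ⨆ k : ℚ, ⨆ _ : 0 ≤ k, (ad K L h).eigenspace (k : K)) {c : K →₀ M}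
    (hc : ∀ ν, c ν ∈ (toEnd K L M h).maxGenEigenspace ν) {ν₀ : K} (hν₀ : ν₀ ∈ c.support)
    (hlow : ∀ q : ℚ, 0 < q → ν₀ - q ∉ c.support) (h0 : ⁅f + r, c.sum fun _ m ↦ m⁆ = 0) :
    ⁅f, c ν₀⁆ = 0 := by
  classical
  set G := (toEnd K L M h).maxGenEigenspace
  set Z := ⨆ (μ) (_ : μ ≠ ν₀ - 2), G μ
  have hGZ : ∀ μ, μ ≠ ν₀ - 2 → G μ ≤ Z := fun μ hμ ↦ le_iSup₂_of_le μ hμ le_rfl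
  have hrZ : ∀ ν ∈ c.support, ⁅r, c ν⁆ ∈ Z := fun ν hν ↦ by
    refine iSup₂_le (fun k hk ↦ hGZ _ fun heq ↦ hlow (2 + k) (by positivity) ?_)
      (lie_mem_iSup_maxGenEigenspace_add hr (hc ν))
    convert hν using 1
    push_cast
    linear_combination -heq
  have hfZ : ∀ ν ≠ ν₀, ⁅f, c ν⁆ ∈ Z := fun ν hν ↦
    hGZ _ (fun heq ↦ hν (by linear_combination heq)) (lie_mem_maxGenEigenspace_add hf (hc ν))
  have hZ : ⁅f, c ν₀⁆ ∈ Z := by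
    rw [Finsupp.sum, lie_sum, ← Finset.add_sum_erase _ _ hν₀, add_lie] at h0
    rw [← neg_mem_iff, neg_eq_of_add_eq_zero_right ((add_assoc _ _ _).symm.trans h0)]
    refine add_mem (hrZ ν₀ hν₀) (Submodule.sum_mem _ fun ν hν ↦ ?_)
    rw [add_lie]
    exact add_mem (hfZ ν (Finset.ne_of_mem_erase hν)) (hrZ ν (Finset.mem_of_mem_erase hν))
  have hG : ⁅f, c ν₀⁆ ∈ G (ν₀ - 2) := by
    rw [sub_eq_add_neg]; exact lie_mem_maxGenEigenspace_add hf (hc ν₀)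
  exact (Submodule.disjoint_def.mp ((toEnd K L M h).independent_maxGenEigenspace (ν₀ - 2))) _ hG hZ

end LowestWeight

section BaseChange

open TensorProduct

variable {R A L : Type*} [CommRing R] [CommRing A] [Algebra R A] [LieRing L] [LieAlgebra R L]

lemma IsSl2Triple.baseChange [FaithfulSMul R A] [Module.Flat R L] {h e f : L}
    (t : IsSl2Triple h e f) :
    IsSl2Triple ((1 : A) ⊗ₜ[R] h) ((1 : A) ⊗ₜ[R] e) ((1 : A) ⊗ₜ[R] f) where
  h_ne_zero := by
    rw [Ne, ← tmul_zero L (1 : A)]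
    exact (Module.Flat.tensorProduct_mk_injective R L A).ne t.h_ne_zero
  lie_e_f := by rw [ExtendScalars.bracket_tmul, mul_one, t.lie_e_f]
  lie_h_e_nsmul := by rw [ExtendScalars.bracket_tmul, mul_one, t.lie_h_e_nsmul, tmul_smul]
  lie_h_f_nsmul := by rw [ExtendScalars.bracket_tmul, mul_one, t.lie_h_f_nsmul, tmul_neg, tmul_smul]

lemma tmul_mem_iSup_eigenspace_ad {ι : Type*} {P : ι → Prop} {w : ι → R} {x r : L}
    (hr : r ∈ ⨆ i, ⨆ _ : P i, (ad R L x).eigenspace (w i)) :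
    (1 : A) ⊗ₜ[R] r ∈
      ⨆ i, ⨆ _ : P i, (ad A (A ⊗[R] L) (1 ⊗ₜ x)).eigenspace (algebraMap R A (w i)) := by
  induction hr using Submodule.iSup_induction' with
  | mem i r hr =>
    induction hr using Submodule.iSup_induction' with
    | mem hi r hr =>
      refine Submodule.mem_iSup_of_mem i (Submodule.mem_iSup_of_mem hi ?_)
      rw [Module.End.mem_eigenspace_iff] at hr ⊢
      rw [ad_apply, ExtendScalars.bracket_tmul, mul_one, ← ad_apply R, hr, tmul_smul,
        algebraMap_smul]
    | zero => simp
    | add r s _ _ hr hs => rw [tmul_add]; exact add_mem hr hs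
  | zero => simp
  | add r s _ _ hr hs => rw [tmul_add]; exact add_mem hr hs

end BaseChange

namespace IsSl2Triple

section WeaklyPrimitive

variable {R L M : Type*} [CommRing R] [LieRing L] [LieAlgebra R L] [AddCommGroup M] [Module R M]
  [LieRingModule L M] [LieModule R L M] {h e f : L} {m : M} {μ : R}

lemma lie_f_lie_h_eq_zero (t : IsSl2Triple h e f) (hm : ⁅f, m⁆ = 0) : ⁅f, ⁅h, m⁆⁆ = 0 := by
  rw [leibniz_lie f h m, ← lie_skew f h, t.lie_h_f_nsmul]
  simp [hm]

lemma lie_f_lie_e_lie_h_eq_zero (t : IsSl2Triple h e f) (hm : ⁅f, ⁅e, m⁆⁆ = 0) :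
    ⁅f, ⁅e, ⁅h, m⁆⁆⁆ = 0 := by
  rw [leibniz_lie e h m, ← lie_skew e h, t.lie_h_e_nsmul, neg_lie, nsmul_lie, lie_add, lie_neg,
    lie_nsmul, hm, t.lie_f_lie_h_eq_zero hm]
  simp

local notation "ψ " n => ((toEnd R L M f) ^ n) m

lemma lie_h_pow_toEnd_f_of_lie_h (t : IsSl2Triple h e f) (hm : ⁅h, m⁆ = μ • m) (n : ℕ) :
    ⁅h, ψ n⁆ = (μ - 2 * n) • ψ n := by
  have := t.symm.lie_h_pow_toEnd_e (m := m) (μ := -μ) (by rw [neg_lie, hm, neg_smul]) n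
  rw [neg_lie, neg_eq_iff_eq_neg, ← neg_smul] at this
  rw [this]
  congr 1
  ring

lemma lie_e_pow_succ_toEnd_f_of_lie_f_lie_e (t : IsSl2Triple h e f) (hm : ⁅h, m⁆ = μ • m)
    (hfe : ⁅f, ⁅e, m⁆⁆ = 0) (n : ℕ) : ⁅e, ψ (n + 1)⁆ = ((n + 1) * (μ - n)) • ψ n := by
  induction n with
  | zero =>
    simp only [zero_add, pow_one, toEnd_apply_apply, Nat.cast_zero, sub_zero, one_mul, pow_zero,
      Module.End.one_apply, leibniz_lie e, t.lie_e_f, hfe, hm, add_zero]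
  | succ n ih =>
    rw [pow_succ', Module.End.mul_apply, toEnd_apply_apply, leibniz_lie e, t.lie_e_f,
      t.lie_h_pow_toEnd_f_of_lie_h hm, ih, lie_smul, ← toEnd_apply_apply R, ← Module.End.mul_apply,
      ← pow_succ', ← add_smul]
    congr 1
    push_cast
    ring

lemma exists_nat_of_lie_f_lie_e_eq_zero [IsDomain R] [CharZero R] [IsNoetherian R M]
    [Module.IsTorsionFree R M] (t : IsSl2Triple h e f) (hm0 : m ≠ 0) (hm : ⁅h, m⁆ = μ • m)
    (hfe : ⁅f, ⁅e, m⁆⁆ = 0) : ∃ n : ℕ, μ = n := by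
  suffices ∃ n : ℕ, (ψ n) = 0 by
    obtain ⟨n, hn₁, hn₂⟩ := Nat.exists_not_and_succ_of_not_zero_of_exists hm0 this
    refine ⟨n, ?_⟩
    have := t.lie_e_pow_succ_toEnd_f_of_lie_f_lie_e hm hfe n
    rw [hn₂, lie_zero, eq_comm, smul_eq_zero_iff_left hn₁, mul_eq_zero, sub_eq_zero] at this
    exact this.resolve_left (Nat.cast_add_one_ne_zero n)
  by_contra! hψ
  have hinj : Function.Injective fun n : ℕ ↦ μ - 2 * n := fun a b hab ↦ by simpa using hab
  have := (Module.End.eigenvectors_linearIndependent' (toEnd R L M h) _ hinj (fun n ↦ ψ n)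
    fun n ↦ ⟨Module.End.mem_eigenspace_iff.mpr (t.lie_h_pow_toEnd_f_of_lie_h hm n), hψ n⟩).finite
  exact not_finite ℕ

end WeaklyPrimitive

section FiniteDimensional

variable {K L M : Type*} [Field K] [CharZero K] [LieRing L] [LieAlgebra K L] [AddCommGroup M]
  [Module K M] [LieRingModule L M] [LieModule K L M] [FiniteDimensional K M]
  {h e f r : L} {y : M}

theorem disjoint_ker_toEnd_f_range_toEnd_e [IsTriangularizable K L M] (t : IsSl2Triple h e f) :
    Disjoint (LinearMap.ker (toEnd K L M f)) (LinearMap.range (toEnd K L M e)) := by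
  rw [Submodule.disjoint_def]
  rintro _ hfv ⟨w, rfl⟩
  by_contra hv
  rw [LinearMap.mem_ker, toEnd_apply_apply] at hfv
  have hker_f : ∀ u ∈ LinearMap.ker (toEnd K L M f),
      toEnd K L M h u ∈ LinearMap.ker (toEnd K L M f) := fun _ ↦ t.lie_f_lie_h_eq_zero
  have hker_fe : ∀ u ∈ LinearMap.ker (toEnd K L M f * toEnd K L M e),
      toEnd K L M h u ∈ LinearMap.ker (toEnd K L M f * toEnd K L M e) :=
    fun _ ↦ t.lie_f_lie_e_lie_h_eq_zero
  obtain ⟨c, hc, rfl⟩ := Module.End.exists_finsupp_mem_inf_maxGenEigenspace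
    (IsTriangularizable.maxGenEigenspace_eq_top h) hker_fe (show w ∈ _ from hfv)
  obtain ⟨ν, -, hν⟩ : ∃ ν ∈ c.support, ⁅e, c ν⁆ ≠ 0 := by
    refine Finset.exists_ne_zero_of_sum_ne_zero ?_
    simpa [Finsupp.sum, lie_sum] using hv
  obtain ⟨n, hn⟩ : ∃ n : ℕ, -(ν + 2) = n := by
    have hG : ⁅e, c ν⁆ ∈ (toEnd K L M h).maxGenEigenspace (ν + 2) :=
      lie_mem_maxGenEigenspace_add (t.lie_h_e_smul K) (hc ν).2
    obtain ⟨u, hu, hu'⟩ := Module.End.exists_hasEigenvector_of_inf_maxGenEigenspace_ne_bot hker_f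
      (Submodule.ne_bot_iff _ |>.mpr ⟨_, ⟨(hc ν).1, hG⟩, hν⟩)
    refine HasPrimitiveVectorWith.exists_nat (t := t.symm) (m := u) ⟨hu'.2, ?_, hu⟩
    rw [neg_lie, ← toEnd_apply_apply K, hu'.apply_eq_smul, neg_smul]
  obtain ⟨n', hn'⟩ : ∃ n' : ℕ, ν = n' := by
    obtain ⟨w, hw, hw'⟩ := Module.End.exists_hasEigenvector_of_inf_maxGenEigenspace_ne_bot hker_fe
      (μ := ν) (Submodule.ne_bot_iff _ |>.mpr ⟨_, hc ν, fun h0 ↦ hν (by rw [h0, lie_zero])⟩)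
    exact t.exists_nat_of_lie_f_lie_e_eq_zero hw'.2 hw'.apply_eq_smul hw
  have : ((n + n' + 2 : ℕ) : K) = 0 := by
    push_cast
    linear_combination -hn - hn'
  exact absurd (Nat.cast_eq_zero.mp this) (by omega)

theorem eq_zero_of_lie_add_eq_zero_of_isTriangularizable [IsTriangularizable K L M]
    (t : IsSl2Triple h e f) (hr : r ∈ ⨆ k : ℚ, ⨆ _ : 0 ≤ k, (ad K L h).eigenspace (k : K))
    (hy : y ∈ LinearMap.range (toEnd K L M e)) (hy0 : ⁅f + r, y⁆ = 0) : y = 0 := by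
  have hrange : ∀ u ∈ LinearMap.range (toEnd K L M e),
      toEnd K L M h u ∈ LinearMap.range (toEnd K L M e) := by
    rintro _ ⟨u, rfl⟩
    refine ⟨(2 : K) • u + ⁅h, u⁆, ?_⟩
    simp only [toEnd_apply_apply, lie_add, lie_smul]
    rw [leibniz_lie h e u, t.lie_h_e_smul K, smul_lie]
  obtain ⟨c, hc, rfl⟩ := Module.End.exists_finsupp_mem_inf_maxGenEigenspace
    (IsTriangularizable.maxGenEigenspace_eq_top h) hrange hy
  by_contra hy
  have hc0 : c ≠ 0 := by
    rintro rfl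
    exact hy Finsupp.sum_zero_index
  obtain ⟨ν₀, hν₀, hlow⟩ :=
    Finset.exists_forall_sub_ratCast_notMem (Finsupp.support_nonempty_iff.mpr hc0)
  have hf : ⁅h, f⁆ = (-2 : K) • f := by rw [t.lie_lie_smul_f K, neg_smul]
  have hfc := lie_apply_eq_zero_of_lie_add_sum_eq_zero hf hr (fun ν ↦ (hc ν).2) hν₀ hlow hy0
  exact Finsupp.mem_support_iff.mp hν₀
    (Submodule.disjoint_def.mp t.disjoint_ker_toEnd_f_range_toEnd_e _ hfc (hc ν₀).1)

theorem eq_zero_of_lie_add_eq_zero (t : IsSl2Triple h e f)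
    (hr : r ∈ ⨆ k : ℚ, ⨆ _ : 0 ≤ k, (ad K L h).eigenspace (k : K))
    (hy : y ∈ LinearMap.range (toEnd K L M e)) (hy0 : ⁅f + r, y⁆ = 0) : y = 0 := by
  let K' := AlgebraicClosure K
  have hrK' := tmul_mem_iSup_eigenspace_ad (A := K') hr
  simp_rw [map_ratCast] at hrK'
  obtain ⟨u, rfl⟩ := hy
  apply Module.Flat.tensorProduct_mk_injective K M K'
  change (1 : K') ⊗ₜ[K] _ = (1 : K') ⊗ₜ[K] 0
  rw [TensorProduct.tmul_zero]
  refine t.baseChange.eq_zero_of_lie_add_eq_zero_of_isTriangularizable hrK' ⟨1 ⊗ₜ u, ?_⟩ ?_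
  · simp
  · rw [← TensorProduct.tmul_add, ExtendScalars.bracket_tmul, mul_one, hy0, TensorProduct.tmul_zero]

end FiniteDimensional

end IsSl2Triple

theorem ad_injOn_range_ad_e_general
    {F : Type*} [Field F] [CharZero F]
    {g : Type*} [LieRing g] [LieAlgebra F g] [Module.Finite F g]
    (e x f : g)
    (hxe : ⁅x, e⁆ = e) (hxf : ⁅x, f⁆ = -f) (hef : ⁅e, f⁆ = (2 : F) • x)
    (r : g)
    (hr : r ∈ ⨆ k : ℚ, ⨆ _ : (0 : ℚ) ≤ k,
        Module.End.eigenspace (LieAlgebra.ad F g x) (k : F)) :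
    Set.InjOn (fun a => ⁅f + r, a⁆)
      (LinearMap.range (LieAlgebra.ad F g e) : Set g) ∧
    Set.BijOn (fun a => ⁅f + r, a⁆)
      (LinearMap.range (LieAlgebra.ad F g e) : Set g)
      ((fun a => ⁅f + r, a⁆) '' (LinearMap.range (LieAlgebra.ad F g e) : Set g)) := by
  have key : ∀ y ∈ LinearMap.range (ad F g e), ⁅f + r, y⁆ = 0 → y = 0 := by
    rcases eq_or_ne x 0 with rfl | hx
    · rintro _ ⟨u, rfl⟩ -
      rw [ad_apply, ← hxe, zero_lie, zero_lie]
    have t : IsSl2Triple ((2 : F) • x) e f :=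
      { h_ne_zero := smul_ne_zero two_ne_zero hx
        lie_e_f := hef
        lie_h_e_nsmul := by rw [smul_lie, hxe, ofNat_smul_eq_nsmul]
        lie_h_f_nsmul := by rw [smul_lie, hxf, smul_neg, ofNat_smul_eq_nsmul] }
    have hle : ⨆ k : ℚ, ⨆ _ : 0 ≤ k, (ad F g x).eigenspace (k : F) ≤
        ⨆ k : ℚ, ⨆ _ : 0 ≤ k, (ad F g ((2 : F) • x)).eigenspace (k : F) :=
      iSup₂_le fun k hk ↦ (eigenspace_ad_le_eigenspace_ad_smul x (2 : F) k).trans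
        (le_iSup₂_of_le (2 * k) (by positivity) (by rw [Rat.cast_mul, Rat.cast_ofNat]))
    exact fun y hy ↦ t.eq_zero_of_lie_add_eq_zero (hle hr) hy
  have hinj : Set.InjOn (fun a ↦ ⁅f + r, a⁆) (LinearMap.range (ad F g e)) := fun a ha b hb hab ↦
    sub_eq_zero.mp (key _ (sub_mem ha hb) (by rw [lie_sub]; exact sub_eq_zero.mpr hab))
  exact ⟨hinj, hinj.bijOn_image⟩

/-- `ad (f+r)` is injective on `[e, g]`, hence a bijection from
`[e,g]` onto `[f+r, [e,g]]`. -/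
theorem ad_injOn_range_ad_e
    {F : Type*} [Field F] [CharZero F]
    {g : Type*} [LieRing g] [LieAlgebra F g] [Module.Finite F g]
    [LieAlgebra.IsSimple F g]
    (e x f : g)
    (hxe : ⁅x, e⁆ = e) (hxf : ⁅x, f⁆ = -f) (hef : ⁅e, f⁆ = (2 : F) • x)
    (r : g)
    (hr : r ∈ ⨆ k : ℚ, ⨆ _ : (0 : ℚ) ≤ k,
        Module.End.eigenspace (LieAlgebra.ad F g x) (k : F)) :
    Set.InjOn (fun a => ⁅f + r, a⁆)
      (LinearMap.range (LieAlgebra.ad F g e) : Set g) ∧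
    Set.BijOn (fun a => ⁅f + r, a⁆)
      (LinearMap.range (LieAlgebra.ad F g e) : Set g)
      ((fun a => ⁅f + r, a⁆) '' (LinearMap.range (LieAlgebra.ad F g e) : Set g)) :=
  ad_injOn_range_ad_e_general e x f hxe hxf hef r hr
end

section
/- Let g be a finite-dimensional simple Lie algebra with sl2-triple {e,h=2x,f} and r ∈ g_{≥0}. Then [f+r, g] + g^e = g. (Transversality of the Slodowy slice to adjoint orbits.) -/
/-!
Write `X, E, F` for `ad x, ad e, ad f` and `G μ` for the generalized `μ`-eigenspace of `X`.
The relation `[X, E] = E` makes `E` and `F` nilpotent, and the commutation formula for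
`E Fᵏ⁺¹` shows that the last nonzero vector of an `F`-string starting in `ker E` is an
eigenvector of `X`; applied to `g` modulo the sum of the `G μ`, this shows that the `G μ` span
`g`. The same formula makes `E F` injective, hence bijective, on `G ν` unless `2 ν ∈ -ℕ`, and
then `F E` is bijective on `G (ν - 1)`; either way `G μ ⊆ ker E + F (G (μ + 1))`. Finally, for
`v = u + F w` with `w ∈ G (μ + 1)` we have `F w = ad (f + r) w - [r, w]` with `[r, w]` in the
`G (μ + 1 + q)`, `q ≥ 0`, so induction over the finitely many eigenvalues lying a rational
distance `≥ 1` above `μ` finishes the proof.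
-/

open Module

section Ring

variable {A : Type*} [Ring A]

lemma mul_pow_sub_pow_mul_of_mul_sub_mul_eq_self {x a : A} (h : x * a - a * x = a) (n : ℕ) :
    x * a ^ n - a ^ n * x = n * a ^ n := by
  induction n with
  | zero => simp
  | succ n ih =>
    calc x * a ^ (n + 1) - a ^ (n + 1) * x
        = (x * a ^ n - a ^ n * x) * a + a ^ n * (x * a - a * x) := by noncomm_ring
      _ = (n + 1 : ℕ) * a ^ (n + 1) := by
        rw [ih, h, pow_succ]; push_cast; noncomm_ring

/-- The `sl₂`-relations in the normalisation `h = 2 x` (cf. `IsSl2Triple`), so that the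
eigenvalues of `ad x` give the Dynkin grading. -/
structure IsDynkinTriple (x e f : A) : Prop where
  commutator_x_e : x * e - e * x = e
  commutator_x_f : x * f - f * x = -f
  commutator_e_f : e * f - f * e = 2 * x

namespace IsDynkinTriple

variable {x e f : A}

lemma symm (t : IsDynkinTriple x e f) : IsDynkinTriple (-x) f e where
  commutator_x_e := by
    rw [show -x * f - f * -x = -(x * f - f * x) by noncomm_ring, t.commutator_x_f, neg_neg]
  commutator_x_f := by
    rw [show -x * e - e * -x = -(x * e - e * x) by noncomm_ring, t.commutator_x_e]
  commutator_e_f := by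
    rw [show f * e - e * f = -(e * f - f * e) by noncomm_ring, t.commutator_e_f]; noncomm_ring

lemma mul_pow_succ_sub_pow_succ_mul (t : IsDynkinTriple x e f) (k : ℕ) :
    e * f ^ (k + 1) - f ^ (k + 1) * e = (k + 1) * ((2 * x + k) * f ^ k) := by
  induction k with
  | zero => simpa using t.commutator_e_f
  | succ k ih =>
    have hfx : f ^ (k + 1) * x = x * f ^ (k + 1) + (k + 1 : ℕ) * f ^ (k + 1) := by
      rw [← mul_pow_sub_pow_mul_of_mul_sub_mul_eq_self t.symm.commutator_x_e]; noncomm_ring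
    calc e * f ^ (k + 1 + 1) - f ^ (k + 1 + 1) * e
        = (e * f ^ (k + 1) - f ^ (k + 1) * e) * f + f ^ (k + 1) * (e * f - f * e) := by
          rw [pow_succ f (k + 1)]; noncomm_ring
      _ = (k + 1) * ((2 * x + k) * f ^ k) * f + 2 * (f ^ (k + 1) * x) := by
          rw [ih, t.commutator_e_f]; noncomm_ring
      _ = _ := by rw [hfx, pow_succ f k]; push_cast; noncomm_ring

end IsDynkinTriple

end Ring

namespace Module.End

section CommRing

variable {R M : Type*} [CommRing R] [AddCommGroup M] [Module R M]

lemma mapsTo_maxGenEigenspace_add_of_mul_sub_mul_eq_smul {X A : End R M} {c : R}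
    (h : X * A - A * X = c • A) (μ : R) :
    Set.MapsTo A (X.maxGenEigenspace μ) (X.maxGenEigenspace (μ + c)) := by
  have hA : SemiconjBy A (X - μ • 1) (X - (μ + c) • 1) := by
    simp only [SemiconjBy, mul_sub, sub_mul, add_smul, add_mul, mul_smul_comm, smul_mul_assoc,
      mul_one, one_mul]
    rw [← h]; abel
  intro v hv
  obtain ⟨k, hk⟩ := (mem_maxGenEigenspace _ _ _).mp hv
  refine (mem_maxGenEigenspace _ _ _).mpr ⟨k, ?_⟩
  rw [← mul_apply, ← (hA.pow_right k).eq, mul_apply, hk, map_zero]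

lemma maxGenEigenspace_neg (X : End R M) (μ : R) :
    (-X).maxGenEigenspace (-μ) = X.maxGenEigenspace μ := by
  ext v
  have hX : -X - (-μ) • 1 = -(X - μ • 1) := by rw [neg_smul]; abel
  simp only [mem_maxGenEigenspace]
  refine exists_congr fun k => ?_
  rw [hX, neg_pow, mul_apply]
  rcases neg_one_pow_eq_or (End R M) k with h | h <;> simp [h]

lemma eq_of_mem_maxGenEigenspace [IsDomain R] [IsTorsionFree R M] {X : End R M} {a b : R}
    {v : M} (hv : v ≠ 0) (ha : v ∈ X.maxGenEigenspace a) (hb : v ∈ X.maxGenEigenspace b) :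
    a = b := by
  by_contra hab
  exact hv (Submodule.disjoint_def.mp (X.disjoint_genEigenspace hab ⊤ ⊤) v ha hb)

end CommRing

variable {K V : Type*} [Field K] [AddCommGroup V] [Module K V] [FiniteDimensional K V]

lemma _root_.Submodule.map_eq_self_of_le_comap_of_disjoint_ker {T : End K V}
    {p : Submodule K V} (hp : p ≤ p.comap T) (hT : Disjoint p (LinearMap.ker T)) :
    p.map T = p :=
  Submodule.eq_of_le_of_finrank_eq (Submodule.map_le_iff_le_comap.mpr hp) <| by
    rw [← LinearMap.range_domRestrict,
      LinearMap.finrank_range_of_inj (LinearMap.injective_domRestrict_iff.mpr hT)]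

lemma isNilpotent_of_mul_sub_mul_eq_self [CharZero K] {X A : End K V} (h : X * A - A * X = A) :
    IsNilpotent A := by
  by_contra hA
  let D : End K (End K V) := LinearMap.mulLeft K X - LinearMap.mulRight K X
  have hD : ∀ n : ℕ, D.HasEigenvalue n := fun n => hasEigenvalue_of_hasEigenvector
    ⟨mem_eigenspace_iff.mpr (by
      simpa [D, Nat.cast_smul_eq_nsmul, nsmul_eq_mul] using
        mul_pow_sub_pow_mul_of_mul_sub_mul_eq_self h n),
      fun h0 => hA ⟨n, h0⟩⟩
  exact Set.infinite_range_of_injective Nat.cast_injective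
    (D.finite_hasEigenvalue.subset (Set.range_subset_iff.mpr hD))

lemma mem_iSup_maxGenEigenspace_of_sub_smul_apply_mem (X : End K V) (μ : K) {w : V}
    (hw : (X - μ • 1) w ∈ ⨆ c, X.maxGenEigenspace c) :
    w ∈ ⨆ c, X.maxGenEigenspace c := by
  set p := ⨆ c, X.maxGenEigenspace c
  -- `X - μ` is invertible on every generalized eigenspace but the `μ`-th one.
  have hp : p ≤ p.map (X - μ • 1) ⊔ X.maxGenEigenspace μ := by
    refine iSup_le fun c => ?_
    rcases eq_or_ne c μ with rfl | hc
    · exact le_sup_right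
    have hcomm : Commute X (X - μ • 1) :=
      (Commute.refl X).sub_right (.smul_right (.one_right X) μ)
    rw [← Submodule.map_eq_self_of_le_comap_of_disjoint_ker
      (fun v hv => mapsTo_maxGenEigenspace_of_comm hcomm c hv)
      ((X.disjoint_genEigenspace hc ⊤ 1).mono_right eigenspace_def.ge)]
    exact le_sup_of_le_left (Submodule.map_mono (le_iSup _ c))
  obtain ⟨_, ⟨v, hv, rfl⟩, u, hu, huv⟩ := Submodule.mem_sup.mp (hp hw)
  have hwv : w - v ∈ X.maxGenEigenspace μ := by
    obtain ⟨k, hk⟩ := (mem_maxGenEigenspace _ _ _).mp hu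
    refine (mem_maxGenEigenspace _ _ _).mpr ⟨k + 1, ?_⟩
    rwa [pow_succ, mul_apply, map_sub, ← huv, add_sub_cancel_left]
  simpa using p.add_mem hv (Submodule.mem_iSup_of_mem μ hwv)

end Module.End

lemma IsNilpotent.exists_pow_apply_ne_zero_and_apply_pow_apply_eq_zero {R M : Type*}
    [Semiring R] [AddCommMonoid M] [Module R M] {A : End R M} (hA : IsNilpotent A) {v : M}
    (hv : v ≠ 0) : ∃ k : ℕ, (A ^ k) v ≠ 0 ∧ A ((A ^ k) v) = 0 := by
  obtain ⟨N, hN⟩ := hA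
  simpa only [pow_succ', Module.End.mul_apply] using Nat.exists_not_and_succ_of_not_zero_of_exists
    (p := fun k => (A ^ k) v = 0) (by simpa using hv) ⟨N, by simp [hN]⟩

lemma Set.Finite.forall_of_forall_add_ratCast_imp {K : Type*} [DivisionRing K] [CharZero K]
    {S : Set K} (hS : S.Finite) {P : K → Prop} (h₀ : ∀ μ ∉ S, P μ)
    (step : ∀ μ, (∀ q : ℚ, 1 ≤ q → P (μ + q)) → P μ) (μ : K) : P μ := by
  obtain ⟨n, hn⟩ : ∃ n : ℕ, ∀ q : ℚ, n ≤ q → μ + q ∉ S := by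
    obtain ⟨b, hb⟩ := (hS.preimage (f := fun q : ℚ => μ + q)
      fun a _ b _ h => by simpa using h).bddAbove
    obtain ⟨n, hn⟩ := exists_nat_gt b
    exact ⟨n, fun q hq hqS => (hb hqS).not_gt (hn.trans_le hq)⟩
  induction n generalizing μ with
  | zero => exact h₀ μ (by simpa using hn 0 le_rfl)
  | succ n ih =>
    refine step μ fun q hq => ih _ fun q' hq' => ?_
    simpa [add_assoc] using hn (q + q') (by push_cast; linarith)

namespace IsDynkinTriple

open Module.End

section CommRing

variable {R M : Type*} [CommRing R] [AddCommGroup M] [Module R M] {X E F : End R M}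

lemma mapsTo_pow_e (t : IsDynkinTriple X E F) (k : ℕ) (μ : R) :
    Set.MapsTo (E ^ k) (X.maxGenEigenspace μ) (X.maxGenEigenspace (μ + k)) :=
  mapsTo_maxGenEigenspace_add_of_mul_sub_mul_eq_smul (by
    rw [mul_pow_sub_pow_mul_of_mul_sub_mul_eq_self t.commutator_x_e, Nat.cast_smul_eq_nsmul,
      nsmul_eq_mul]) μ

lemma mapsTo_e (t : IsDynkinTriple X E F) (μ : R) :
    Set.MapsTo E (X.maxGenEigenspace μ) (X.maxGenEigenspace (μ + 1)) :=
  mapsTo_maxGenEigenspace_add_of_mul_sub_mul_eq_smul (by rw [one_smul, t.commutator_x_e]) μ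

lemma mapsTo_f (t : IsDynkinTriple X E F) (μ : R) :
    Set.MapsTo F (X.maxGenEigenspace μ) (X.maxGenEigenspace (μ - 1)) := by
  simpa only [sub_eq_add_neg] using mapsTo_maxGenEigenspace_add_of_mul_sub_mul_eq_smul
    (by rw [neg_one_smul, t.commutator_x_f]) μ

lemma mapQ (t : IsDynkinTriple X E F) (p : Submodule R M) (hX : p ≤ p.comap X)
    (hE : p ≤ p.comap E) (hF : p ≤ p.comap F) :
    IsDynkinTriple (p.mapQ p X hX) (p.mapQ p E hE) (p.mapQ p F hF) where
  commutator_x_e := by ext v; simpa using congr(p.mkQ ($(t.commutator_x_e) v))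
  commutator_x_f := by ext v; simpa using congr(p.mkQ ($(t.commutator_x_f) v))
  commutator_e_f := by ext v; simpa using congr(p.mkQ ($(t.commutator_e_f) v))

end CommRing

variable {K V : Type*} [Field K] [CharZero K] [AddCommGroup V] [Module K V] [FiniteDimensional K V]
  {X E F : End K V}

lemma isNilpotent_e (t : IsDynkinTriple X E F) : IsNilpotent E :=
  isNilpotent_of_mul_sub_mul_eq_self t.commutator_x_e

lemma exists_hasEigenvector_pow_apply (t : IsDynkinTriple X E F) {v : V} (hv : F (E v) = 0)
    (hv0 : v ≠ 0) : ∃ k : ℕ, X.HasEigenvector (-(k / 2)) ((F ^ k) v) := by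
  obtain ⟨k, hk, hk1⟩ :=
    t.symm.isNilpotent_e.exists_pow_apply_ne_zero_and_apply_pow_apply_eq_zero hv0
  refine ⟨k, mem_eigenspace_iff.mpr ?_, hk⟩
  set y := (F ^ k) v
  have h1 : (F ^ (k + 1)) v = 0 := by rw [pow_succ', mul_apply, hk1]
  have h2 : (F ^ (k + 1)) (E v) = 0 := by rw [pow_succ, mul_apply, hv, map_zero]
  have key : (E * F ^ (k + 1) - F ^ (k + 1) * E) v = 0 := by
    rw [LinearMap.sub_apply, mul_apply, mul_apply, h1, h2, map_zero, sub_zero]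
  simp only [t.mul_pow_succ_sub_pow_succ_mul k, mul_apply, LinearMap.add_apply,
    Module.End.natCast_apply, Module.End.ofNat_apply, Module.End.one_apply,
    ← Nat.cast_smul_eq_nsmul K] at key
  have : (2 * ((k : K) + 1)) • (X y + (k / 2 : K) • y) = 0 := by
    rw [← key]; module
  rw [smul_eq_zero, or_iff_right (mul_ne_zero two_ne_zero k.cast_add_one_ne_zero)] at this
  rw [eq_neg_of_add_eq_zero_left this, neg_smul]

lemma exists_hasEigenvector [Nontrivial V] (t : IsDynkinTriple X E F) :
    ∃ μ v, X.HasEigenvector μ v := by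
  obtain ⟨v, hv⟩ := exists_ne (0 : V)
  obtain ⟨k, hk, hk1⟩ := t.isNilpotent_e.exists_pow_apply_ne_zero_and_apply_pow_apply_eq_zero hv
  obtain ⟨j, hj⟩ := t.exists_hasEigenvector_pow_apply (by rw [hk1, map_zero]) hk
  exact ⟨_, _, hj⟩

lemma iSup_maxGenEigenspace_eq_top (t : IsDynkinTriple X E F) :
    ⨆ μ, X.maxGenEigenspace μ = ⊤ := by
  set p := ⨆ μ, X.maxGenEigenspace μ
  have invariant {A : End K V} {c : K} (h : ∀ μ, Set.MapsTo A (X.maxGenEigenspace μ)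
      (X.maxGenEigenspace (μ + c))) : p ≤ p.comap A :=
    iSup_le fun μ v hv => Submodule.mem_iSup_of_mem (μ + c) (h μ hv)
  have hX := invariant (c := 0) fun μ => by
    simpa using mapsTo_maxGenEigenspace_of_comm (Commute.refl X) μ
  have hE := invariant t.mapsTo_e
  have hF := invariant (c := -1) fun μ => by simpa [sub_eq_add_neg] using t.mapsTo_f μ
  by_contra hp
  have : Nontrivial (V ⧸ p) := Submodule.Quotient.nontrivial_iff.mpr hp
  obtain ⟨μ, w, hw⟩ := (t.mapQ p hX hE hF).exists_hasEigenvector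
  obtain ⟨w, rfl⟩ := p.mkQ_surjective w
  refine hw.2 ((Submodule.Quotient.mk_eq_zero p).mpr
    (mem_iSup_maxGenEigenspace_of_sub_smul_apply_mem X μ ?_))
  rw [← Submodule.Quotient.mk_eq_zero]
  simpa [sub_eq_zero] using hw.apply_eq_smul

lemma disjoint_maxGenEigenspace_ker_mul (t : IsDynkinTriple X E F) {ν : K}
    (hν : ∀ k : ℕ, 2 * ν + k ≠ 0) :
    Disjoint (X.maxGenEigenspace ν) (LinearMap.ker (E * F)) := by
  refine Submodule.disjoint_def.mpr fun u hu hEFu => by_contra fun hu0 => ?_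
  -- A nonzero `u` would start an `E`-string ending in an eigenvector of eigenvalue `k / 2`.
  obtain ⟨k, hk⟩ := t.symm.exists_hasEigenvector_pow_apply hEFu hu0
  have hEk : (E ^ k) u ∈ X.maxGenEigenspace (k / 2) := by
    rw [← maxGenEigenspace_neg]; exact eigenspace_le_maxGenEigenspace hk.1
  have := eq_of_mem_maxGenEigenspace hk.2 hEk (t.mapsTo_pow_e k ν hu)
  exact hν k (by linear_combination (-2) * this)

lemma map_mul_maxGenEigenspace (t : IsDynkinTriple X E F) {ν : K}
    (hν : ∀ k : ℕ, 2 * ν + k ≠ 0) :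
    (X.maxGenEigenspace ν).map (E * F) = X.maxGenEigenspace ν :=
  Submodule.map_eq_self_of_le_comap_of_disjoint_ker
    (fun v hv => by simpa using t.mapsTo_e (ν - 1) (t.mapsTo_f ν hv))
    (t.disjoint_maxGenEigenspace_ker_mul hν)

lemma maxGenEigenspace_le_ker_sup_map (t : IsDynkinTriple X E F) (μ : K) :
    X.maxGenEigenspace μ ≤ LinearMap.ker E ⊔ (X.maxGenEigenspace (μ + 1)).map F := by
  by_cases hμ : ∀ k : ℕ, 2 * (μ + 1) + k ≠ 0
  · intro v hv
    obtain ⟨w, hw, hEw⟩ : E v ∈ (X.maxGenEigenspace (μ + 1)).map (E * F) := by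
      rw [t.map_mul_maxGenEigenspace hμ]; exact t.mapsTo_e μ hv
    refine Submodule.mem_sup.mpr ⟨v - F w, ?_, F w, ⟨w, hw, rfl⟩, sub_add_cancel v (F w)⟩
    rw [LinearMap.mem_ker, map_sub, ← hEw, mul_apply, sub_self]
  · push Not at hμ
    obtain ⟨k₀, hk₀⟩ := hμ
    have hμ' : ∀ k : ℕ, 2 * (-μ) + k ≠ 0 := fun k hk =>
      (k + k₀ + 1).cast_add_one_ne_zero (by push_cast; linear_combination hk + hk₀)
    have hFE := t.symm.map_mul_maxGenEigenspace hμ'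
    rw [maxGenEigenspace_neg] at hFE
    calc X.maxGenEigenspace μ = ((X.maxGenEigenspace μ).map E).map F := by
          rw [← Submodule.map_comp]; exact hFE.symm
      _ ≤ (X.maxGenEigenspace (μ + 1)).map F :=
          Submodule.map_mono (Submodule.map_le_iff_le_comap.mpr (t.mapsTo_e μ))
      _ ≤ _ := le_sup_right

theorem range_add_sup_ker_eq_top (t : IsDynkinTriple X E F) {R : End K V}
    (hR : ∀ μ, (X.maxGenEigenspace μ).map R ≤
      ⨆ q : ℚ, ⨆ _ : 0 ≤ q, X.maxGenEigenspace (μ + q)) :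
    LinearMap.range (F + R) ⊔ LinearMap.ker E = ⊤ := by
  set W := LinearMap.range (F + R) ⊔ LinearMap.ker E
  rw [eq_top_iff, ← t.iSup_maxGenEigenspace_eq_top]
  refine iSup_le <| (Submodule.finite_ne_bot_of_iSupIndep X.independent_maxGenEigenspace)
    |>.forall_of_forall_add_ratCast_imp (fun μ hμ => by simp_all) fun μ ih => ?_
  intro v hv
  obtain ⟨u, hu, _, ⟨w, hw, rfl⟩, rfl⟩ :=
    Submodule.mem_sup.mp (t.maxGenEigenspace_le_ker_sup_map μ hv)
  have hRw : R w ∈ W := by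
    refine (iSup₂_le fun q hq => ?_ : _ ≤ W) (hR (μ + 1) ⟨w, hw, rfl⟩)
    simpa [add_assoc] using ih (1 + q) (by linarith)
  have hFRw : (F + R) w ∈ W := le_sup_left (α := Submodule K V) (LinearMap.mem_range_self _ w)
  simpa using W.add_mem (le_sup_right (α := Submodule K V) hu) (W.sub_mem hFRw hRw)

end IsDynkinTriple

section LieAlgebra

open LieAlgebra Module.End

variable {K L : Type*} [LieRing L]

section CommRing

variable [CommRing K] [LieAlgebra K L]

lemma LieAlgebra.ad_lie_eq_mul_sub_mul (x y : L) :
    ad K L ⁅x, y⁆ = ad K L x * ad K L y - ad K L y * ad K L x := by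
  ext z; simp

lemma LieAlgebra.isDynkinTriple_ad {x e f : L} (hxe : ⁅x, e⁆ = e) (hxf : ⁅x, f⁆ = -f)
    (hef : ⁅e, f⁆ = (2 : K) • x) : IsDynkinTriple (ad K L x) (ad K L e) (ad K L f) where
  commutator_x_e := by rw [← ad_lie_eq_mul_sub_mul, hxe]
  commutator_x_f := by rw [← ad_lie_eq_mul_sub_mul, hxf, map_neg]
  commutator_e_f := by rw [← ad_lie_eq_mul_sub_mul, hef, map_smul, two_smul, two_mul]

end CommRing

variable [Field K] [LieAlgebra K L]

lemma LieAlgebra.map_ad_maxGenEigenspace_le {x r : L}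
    (hr : r ∈ ⨆ q : ℚ, ⨆ _ : 0 ≤ q, (ad K L x).eigenspace (q : K)) (μ : K) :
    ((ad K L x).maxGenEigenspace μ).map (ad K L r) ≤
      ⨆ q : ℚ, ⨆ _ : 0 ≤ q, (ad K L x).maxGenEigenspace (μ + q) := by
  rintro _ ⟨w, hw, rfl⟩
  refine Submodule.iSup_induction _ (motive := fun r => ad K L r w ∈ _) hr (fun q s hs => ?_)
    (by simp) (fun a b ha hb => by simpa using add_mem ha hb)
  by_cases hq : 0 ≤ q
  · rw [iSup_pos hq, mem_eigenspace_iff, ad_apply] at hs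
    refine Submodule.mem_iSup_of_mem q (Submodule.mem_iSup_of_mem hq ?_)
    exact mapsTo_maxGenEigenspace_add_of_mul_sub_mul_eq_smul
      (by rw [← ad_lie_eq_mul_sub_mul, hs, map_smul]) μ hw
  · rw [iSup_neg hq, Submodule.mem_bot] at hs
    simp [hs]

end LieAlgebra

theorem bracket_sup_centralizer_eq_top_general
    {F : Type*} [Field F] [CharZero F]
    {g : Type*} [LieRing g] [LieAlgebra F g] [Module.Finite F g]
    (e x f : g)
    (hxe : ⁅x, e⁆ = e) (hxf : ⁅x, f⁆ = -f) (hef : ⁅e, f⁆ = (2 : F) • x)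
    (r : g)
    (hr : r ∈ ⨆ k : ℚ, ⨆ _ : (0 : ℚ) ≤ k,
        Module.End.eigenspace (LieAlgebra.ad F g x) (k : F)) :
    Submodule.map (LieAlgebra.ad F g (f + r)) ⊤ ⊔
      LinearMap.ker (LieAlgebra.ad F g e) = ⊤ := by
  rw [Submodule.map_top, map_add]
  exact (LieAlgebra.isDynkinTriple_ad hxe hxf hef).range_add_sup_ker_eq_top
    (LieAlgebra.map_ad_maxGenEigenspace_le hr)

/-- `[f+r, g] + g^e = g` (transversality of the Slodowy slice). -/
theorem bracket_sup_centralizer_eq_top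
    {F : Type*} [Field F] [CharZero F]
    {g : Type*} [LieRing g] [LieAlgebra F g] [Module.Finite F g]
    [LieAlgebra.IsSimple F g]
    (e x f : g)
    (hxe : ⁅x, e⁆ = e) (hxf : ⁅x, f⁆ = -f) (hef : ⁅e, f⁆ = (2 : F) • x)
    (r : g)
    (hr : r ∈ ⨆ k : ℚ, ⨆ _ : (0 : ℚ) ≤ k,
        Module.End.eigenspace (LieAlgebra.ad F g x) (k : F)) :
    Submodule.map (LieAlgebra.ad F g (f + r)) ⊤ ⊔
      LinearMap.ker (LieAlgebra.ad F g e) = ⊤ :=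
  bracket_sup_centralizer_eq_top_general e x f hxe hxf hef r hr
end

section
/- Let g be a Lie algebra with sl2-triple {e,h,f} and invariant symmetric bilinear form. For q_j with [h,q_j] = -2δ(j) q_j, q_j ∈ g^f, and q^i ∈ g^e with [h,q^i] = 2δ(i) q^i dual to q_i, one has ((ad e)^n q_j | (ad f)^m q^i) = (-1)^n (n!)^2 binom(2δ(j), n) δ_{i,j} δ_{m,n}. -/
/-!
Since `ad f q_j = 0` and `q_j` has `ad x`-weight `-δ(j)`, the `sl₂` relations give
`ad f ((ad e)^(N+1) q_j) = (N+1)(2δ(j) - N) (ad e)^N q_j`. Invariance of `B` moves `(ad f)^m` to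
the left at the cost of `(-1)^m`. Then `(ad f)^m (ad e)^n q_j` is `(n!)^2 binom(2δ(j), n) q_j`
for `m = n`, vanishes for `m > n` because `ad f q_j = 0`, and for `m < n` is a multiple of
`(ad e)^(n-m) q_j`, which is orthogonal to `q^i` because `ad e q^i = 0`.
-/

open LieModule Finset

lemma prod_range_add_one_mul_sub_eq_neg_one_pow_mul_factorial_sq_mul_choose {R : Type*} [CommRing R]
    (d n : ℕ) :
    ∏ i ∈ range n, ((i + 1 : R) * (i - d)) =
      (-1) ^ n * (n.factorial : R) ^ 2 * (d.choose n : R) := by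
  have hfact : ∏ i ∈ range n, (i + 1 : R) = n.factorial := by
    exact_mod_cast congrArg (Nat.cast (R := R)) (prod_range_add_one_eq_factorial n)
  simp_rw [← neg_sub (d : R), mul_neg, prod_neg, card_range, prod_mul_distrib, hfact,
    ← descPochhammer_eval_eq_prod_range, descPochhammer_eval_eq_descFactorial,
    Nat.descFactorial_eq_factorial_mul_choose]
  push_cast
  ring

lemma Module.End.pow_apply_pow_add_eq_prod_smul {R M : Type*} [CommSemiring R] [AddCommMonoid M]
    [Module R M] {φ ψ : Module.End R M} {v : M} {c : ℕ → R}
    (h : ∀ n, ψ ((φ ^ (n + 1)) v) = c n • (φ ^ n) v) (k r : ℕ) :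
    (ψ ^ k) ((φ ^ (k + r)) v) = (∏ i ∈ range k, c (r + i)) • (φ ^ r) v := by
  induction k with
  | zero => simp
  | succ k ih =>
    rw [pow_succ, Module.End.mul_apply, add_right_comm, h, map_smul, ih, smul_smul,
      prod_range_succ, mul_comm, add_comm r]

section Sl2

variable {R L M : Type*} [CommRing R] [LieRing L] [LieAlgebra R L]
  [AddCommGroup M] [Module R M] [LieRingModule L M] [LieModule R L M]

lemma LinearMap.BilinForm.lieInvariant.apply_toEnd_pow_left {Φ : LinearMap.BilinForm R M}
    (hΦ : Φ.lieInvariant L) (a : L) (n : ℕ) (u w : M) :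
    Φ ((toEnd R L M a ^ n) u) w = (-1) ^ n * Φ u ((toEnd R L M a ^ n) w) := by
  induction n generalizing w with
  | zero => simp
  | succ n ih =>
    nth_rw 1 [pow_succ']
    rw [Module.End.mul_apply, toEnd_apply_apply, hΦ, ← toEnd_apply_apply R, ih,
      pow_succ (toEnd R L M a), Module.End.mul_apply]
    ring

lemma LinearMap.BilinForm.lieInvariant.apply_toEnd_pow_right {Φ : LinearMap.BilinForm R M}
    (hΦ : Φ.lieInvariant L) (a : L) (n : ℕ) (u w : M) :
    Φ u ((toEnd R L M a ^ n) w) = (-1) ^ n * Φ ((toEnd R L M a ^ n) u) w := by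
  rw [hΦ.apply_toEnd_pow_left, ← mul_assoc, ← mul_pow, neg_one_mul, neg_neg, one_pow, one_mul]

variable {e x f : L} {v : M} {μ : R}

lemma lie_toEnd_pow_apply_of_lie_eq_smul (hxe : ⁅x, e⁆ = e) (hv : ⁅x, v⁆ = μ • v) (n : ℕ) :
    ⁅x, (toEnd R L M e ^ n) v⁆ = (μ + n) • (toEnd R L M e ^ n) v := by
  induction n with
  | zero => simpa using hv
  | succ n ih =>
    rw [pow_succ', Module.End.mul_apply, toEnd_apply_apply, leibniz_lie, hxe, ih, lie_smul]
    push_cast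
    module

lemma lie_toEnd_pow_succ_apply_of_lie_eq_zero (hxe : ⁅x, e⁆ = e) (hef : ⁅e, f⁆ = (2 : R) • x)
    (hv : ⁅x, v⁆ = μ • v) (hfv : ⁅f, v⁆ = 0) (n : ℕ) :
    ⁅f, (toEnd R L M e ^ (n + 1)) v⁆ = -((n + 1) * (2 * μ + n)) • (toEnd R L M e ^ n) v := by
  have hfe : ⁅f, e⁆ = -((2 : R) • x) := by rw [← lie_skew, hef]
  induction n with
  | zero =>
    rw [pow_one, toEnd_apply_apply, leibniz_lie, hfv, lie_zero, add_zero, hfe, neg_lie, smul_lie,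
      hv]
    simp only [pow_zero, Module.End.one_apply, Nat.cast_zero]
    module
  | succ n ih =>
    rw [pow_succ' _ (n + 1), Module.End.mul_apply, toEnd_apply_apply, leibniz_lie, ih, lie_smul,
      hfe, neg_lie, smul_lie, lie_toEnd_pow_apply_of_lie_eq_smul hxe hv, ← toEnd_apply_apply R,
      ← Module.End.mul_apply, ← pow_succ']
    push_cast
    module

variable {w : M}

lemma LinearMap.BilinForm.lieInvariant.apply_toEnd_pow_toEnd_pow {Φ : LinearMap.BilinForm R M}
    (hΦ : Φ.lieInvariant L) (hxe : ⁅x, e⁆ = e) (hef : ⁅e, f⁆ = (2 : R) • x)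
    (hv : ⁅x, v⁆ = μ • v) (hfv : ⁅f, v⁆ = 0) (hew : ⁅e, w⁆ = 0) (m n : ℕ) :
    Φ ((toEnd R L M e ^ n) v) ((toEnd R L M f ^ m) w) =
      if m = n then (∏ i ∈ Finset.range n, ((i + 1) * (2 * μ + i))) * Φ v w else 0 := by
  have hdesc := Module.End.pow_apply_pow_add_eq_prod_smul (ψ := toEnd R L M f)
    (lie_toEnd_pow_succ_apply_of_lie_eq_zero hxe hef hv hfv)
  have hdiag (n : ℕ) : (toEnd R L M f ^ n) ((toEnd R L M e ^ n) v) =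
      (∏ i ∈ Finset.range n, -((i + 1) * (2 * μ + i))) • v := by
    simpa using hdesc n 0
  rw [hΦ.apply_toEnd_pow_right]
  rcases lt_trichotomy m n with hmn | rfl | hnm
  · obtain ⟨k, rfl⟩ := Nat.exists_eq_add_of_lt hmn
    rw [add_assoc, hdesc, map_smul, LinearMap.smul_apply, hΦ.apply_toEnd_pow_left,
      Module.End.pow_map_zero_of_le k.succ_pos (by rwa [pow_one]), map_zero, if_neg (by omega)]
    simp
  · rw [hdiag, map_smul, LinearMap.smul_apply, prod_neg, card_range, if_pos rfl, smul_eq_mul,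
      ← mul_assoc, ← mul_assoc, ← mul_pow, neg_one_mul, neg_neg, one_pow, one_mul]
  · obtain ⟨k, rfl⟩ := Nat.exists_eq_add_of_lt hnm
    rw [show n + k + 1 = (k + 1) + n by omega, pow_add (toEnd R L M f), Module.End.mul_apply,
      hdiag, map_smul, Module.End.pow_map_zero_of_le k.succ_pos (by rwa [pow_one]), smul_zero,
      map_zero, if_neg (by omega)]
    simp

end Sl2

theorem pairing_ad_powers_general
    {F : Type*} [Field F] [CharZero F]
    {g : Type*} [LieRing g] [LieAlgebra F g]
    (e x f : g)
    (hxe : ⁅x, e⁆ = e) (hef : ⁅e, f⁆ = (2 : F) • x)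
    (B : LinearMap.BilinForm F g)
    (hBinv : ∀ a b c : g, B ⁅a, b⁆ c = B a ⁅b, c⁆)
    {ι : Type*} [DecidableEq ι]
    (qf qe : ι → g) (d : ι → ℕ)
    (hqf : ∀ j, ⁅f, qf j⁆ = 0)
    (hqfx : ∀ j, ⁅x, qf j⁆ = -(((d j : F) / 2) • qf j))
    (hqe : ∀ j, ⁅e, qe j⁆ = 0)
    (hdual : ∀ i j, B (qf i) (qe j) = if i = j then 1 else 0)
    (i j : ι) (m n : ℕ) :
    B (((LieAlgebra.ad F g e) ^ n) (qf j)) (((LieAlgebra.ad F g f) ^ m) (qe i)) =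
      (-1 : F) ^ n * (n.factorial : F) ^ 2 * ((d j).choose n : F) *
        (if i = j ∧ m = n then 1 else 0) := by
  have hB : B.lieInvariant g := fun a u w => by
    rw [← lie_skew, map_neg, LinearMap.neg_apply, hBinv]
  have hcoeff (k : ℕ) : ((k : F) + 1) * (2 * -((d j : F) / 2) + k) = (k + 1) * (k - d j) := by
    ring
  change B ((toEnd F g g e ^ n) (qf j)) ((toEnd F g g f ^ m) (qe i)) = _
  rw [hB.apply_toEnd_pow_toEnd_pow hxe hef (by rw [hqfx j, ← neg_smul]) (hqf j) (hqe i),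
    hdual, prod_congr rfl fun k _ => hcoeff k,
    prod_range_add_one_mul_sub_eq_neg_one_pow_mul_factorial_sq_mul_choose]
  rcases eq_or_ne i j with rfl | hij
  · by_cases hmn : m = n <;> simp [hmn]
  · simp [hij, hij.symm]

/-- `((ad e)^n q_j | (ad f)^m q^i) = (-1)^n (n!)^2 C(2δ(j), n) δ_{i,j} δ_{m,n}`,
where `q_j` is a basis of `g^f` of `ad x`-eigenvectors with eigenvalue `-δ(j)` and
`q^i` is the dual basis of `g^e` (here `d j = 2δ(j)`). -/
theorem pairing_ad_powers
    {F : Type*} [Field F] [CharZero F]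
    {g : Type*} [LieRing g] [LieAlgebra F g] [Module.Finite F g]
    (e x f : g)
    (hxe : ⁅x, e⁆ = e) (hxf : ⁅x, f⁆ = -f) (hef : ⁅e, f⁆ = (2 : F) • x)
    (B : LinearMap.BilinForm F g)
    (hBsymm : ∀ a b : g, B a b = B b a)
    (hBinv : ∀ a b c : g, B ⁅a, b⁆ c = B a ⁅b, c⁆)
    (hBnd : B.Nondegenerate)
    {ι : Type*} [DecidableEq ι]
    (qf qe : ι → g) (d : ι → ℕ)
    (hqf : ∀ j, ⁅f, qf j⁆ = 0)
    (hqfx : ∀ j, ⁅x, qf j⁆ = -(((d j : F) / 2) • qf j))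
    (hqe : ∀ j, ⁅e, qe j⁆ = 0)
    (hqex : ∀ j, ⁅x, qe j⁆ = ((d j : F) / 2) • qe j)
    (hdual : ∀ i j, B (qf i) (qe j) = if i = j then 1 else 0)
    (i j : ι) (m n : ℕ) :
    B (((LieAlgebra.ad F g e) ^ n) (qf j)) (((LieAlgebra.ad F g f) ^ m) (qe i)) =
      (-1 : F) ^ n * (n.factorial : F) ^ 2 * ((d j).choose n : F) *
        (if i = j ∧ m = n then 1 else 0) :=
  pairing_ad_powers_general e x f hxe hef B hBinv qf qe d hqf hqfx hqe hdual i j m n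
end

section
/- Let g be a finite-dimensional Lie algebra with sl2-triple {e,h=2x,f}, r ∈ g_{≥0}, and define Φ^{(r)} = π_{g^e} ∘ (1 + (ad r)∘(ad f)^{-1}∘π_{[f,g]})^{-1}. Then for every a ∈ g, a − Φ^{(r)}(a) = [f+r, (ad f)^{-1}∘π_{[f,g]}∘(1+(ad r)∘(ad f)^{-1}∘π_{[f,g]})^{-1}(a)], so in particular a − Φ^{(r)}(a) ∈ [f+r, g]. -/
/-! Writing `b = ps a`, the relation `(1 + ad r ∘ sg) b = a` gives `a - b = [r, sg b]`, while
`π_{[f,g]} b = [f, sg b]`; adding the two yields `a - π_{g^e} b = [f + r, sg b]`. -/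

theorem one_sub_one_sub_mul_mul_eq_of_mul_eq_one {A : Type*} [Ring A] {a b s p : A}
    (h : (1 + b * s) * p = 1) : 1 - (1 - a * s) * p = (a + b) * s * p := by
  calc 1 - (1 - a * s) * p = (1 + b * s) * p - (1 - a * s) * p := by rw [h]
    _ = (a + b) * s * p := by noncomm_ring

theorem Phi_complement_formula_general
    {F : Type*} [Field F]
    {g : Type*} [LieRing g] [LieAlgebra F g]
    (f : g)
    (r : g)
    (pf sg ps : Module.End F g)
    (hsg2 : ∀ a : g, ⁅f, sg a⁆ = pf a)
    (hps1 : (1 + LieAlgebra.ad F g r * sg) * ps = 1)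
    (Phi : Module.End F g) (hPhi : Phi = (1 - pf) * ps) :
    ∀ a : g,
      a - Phi a = ⁅f + r, sg (ps a)⁆ ∧
      a - Phi a ∈ Submodule.map (LieAlgebra.ad F g (f + r)) ⊤ := by
  have hpf : LieAlgebra.ad F g f * sg = pf := LinearMap.ext hsg2
  have hOne : 1 - Phi = LieAlgebra.ad F g (f + r) * sg * ps := by
    rw [hPhi, ← hpf, one_sub_one_sub_mul_mul_eq_of_mul_eq_one hps1, map_add]
  intro a
  have key : a - Phi a = ⁅f + r, sg (ps a)⁆ := congrArg (· a) hOne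
  exact ⟨key, key ▸ ⟨sg (ps a), trivial, rfl⟩⟩

/-- with `Φ^{(r)} = π_{g^e} ∘ (1 + (ad r)∘(ad f)^{-1}∘π_{[f,g]})^{-1}`,
for every `a ∈ g` one has
`a - Φ^{(r)}(a) = [f+r, (ad f)^{-1}∘π_{[f,g]}∘(1+(ad r)∘(ad f)^{-1}∘π_{[f,g]})^{-1}(a)]`,
so in particular `a - Φ^{(r)}(a) ∈ [f+r, g]`. Here `pf` is the projection onto `[f,g]`
along `g^e` (so `π_{g^e} = 1 - pf`), `sg = (ad f)^{-1}∘π_{[f,g]}`, and `ps` is the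
two-sided inverse of `1 + (ad r) ∘ sg`. -/
theorem Phi_complement_formula
    {F : Type*} [Field F] [CharZero F]
    {g : Type*} [LieRing g] [LieAlgebra F g] [Module.Finite F g]
    (e x f : g)
    (hxe : ⁅x, e⁆ = e) (hxf : ⁅x, f⁆ = -f) (hef : ⁅e, f⁆ = (2 : F) • x)
    (r : g)
    (hr : r ∈ ⨆ k : ℚ, ⨆ _ : (0 : ℚ) ≤ k,
        Module.End.eigenspace (LieAlgebra.ad F g x) (k : F))
    (pf sg ps : Module.End F g)
    (hpf1 : ∀ a : g, pf a ∈ LinearMap.range (LieAlgebra.ad F g f))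
    (hpf2 : ∀ a : g, a - pf a ∈ LinearMap.ker (LieAlgebra.ad F g e))
    (hsg1 : ∀ a : g, sg a ∈ LinearMap.range (LieAlgebra.ad F g e))
    (hsg2 : ∀ a : g, ⁅f, sg a⁆ = pf a)
    (hps1 : (1 + LieAlgebra.ad F g r * sg) * ps = 1)
    (hps2 : ps * (1 + LieAlgebra.ad F g r * sg) = 1)
    (Phi : Module.End F g) (hPhi : Phi = (1 - pf) * ps) :
    ∀ a : g,
      a - Phi a = ⁅f + r, sg (ps a)⁆ ∧
      a - Phi a ∈ Submodule.map (LieAlgebra.ad F g (f + r)) ⊤ :=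
  Phi_complement_formula_general f r pf sg ps hsg2 hps1 Phi hPhi
end

section
/- Let g be a finite-dimensional simple Lie algebra with sl2-triple {e,h=2x,f}, nondegenerate invariant form, and r ∈ g_{≥0}. Define V^{(r)} = { [f+r,a] : a ∈ g, (a | [f+r,g] ∩ g^e) = 0 }. Then g = g^e ⊕ V^{(r)}, and the map Φ^{(r)} defined by Φ^{(r)} = π_{g^e}∘(1+(ad r)∘(ad f)^{-1}∘π_{[f,g]})^{-1} is the projection onto g^e with kernel V^{(r)}. -/
/-!
The automorphism `exp (ad (-f)) ∘ exp (ad e)` of `g` sends `f` to `-e`, so `ad f` and `ad e`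
have the same rank and the sum `g = g^e + [f, g]` is direct. Its orthogonal under the invariant
form is `[e, g] ∩ g^f = 0`, so `ad f` is injective on `[e, g]`. The operator
`T = 1 + ad r ∘ (ad f)⁻¹ ∘ π_{[f,g]}` fixes `g^e` pointwise and carries `[f, u]` to `[f + r, u]`
for `u ∈ [e, g]`, so it maps `[f, g]` onto `[f + r, [e, g]]`; this is `V^{(r)}` because the
orthogonal of `[f + r, g] ∩ g^e` is `ker ad (f + r) + [e, g]`. Hence
`Φ = π_{g^e} ∘ T⁻¹ = T ∘ π_{g^e} ∘ T⁻¹` is the projection onto `T g^e = g^e` along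
`T [f, g] = V^{(r)}`.
-/

open LinearMap (range ker)

lemma mul_pow_sub_pow_mul_of_mul_sub_mul_eq_smul {R A : Type*} [CommRing R] [Ring A]
    [Algebra R A] {X U : A} {c : R} (h : X * U - U * X = c • U) (m : ℕ) :
    X * U ^ m - U ^ m * X = (m * c) • U ^ m := by
  induction m with
  | zero => simp
  | succ m ih =>
    calc X * U ^ (m + 1) - U ^ (m + 1) * X
        = (X * U ^ m - U ^ m * X) * U + U ^ m * (X * U - U * X) := by noncomm_ring
      _ = ((m + 1 : ℕ) * c) • U ^ (m + 1) := by
        rw [ih, h, smul_mul_assoc, mul_smul_comm, ← pow_succ, ← add_smul]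
        push_cast
        ring_nf

/-- The powers `U ^ m` are eigenvectors of `[X, ·]` for the distinct eigenvalues `m • c`. -/
lemma isNilpotent_of_mul_sub_mul_eq_smul {K A : Type*} [Field K] [CharZero K] [Ring A]
    [Algebra K A] [FiniteDimensional K A] {X U : A} {c : K} (hc : c ≠ 0)
    (h : X * U - U * X = c • U) : IsNilpotent U := by
  by_contra hU
  have heig (m : ℕ) : Module.End.HasEigenvector (LinearMap.mulLeft K X - LinearMap.mulRight K X)
      (m * c) (U ^ m) :=
    ⟨Module.End.mem_eigenspace_iff.2 (mul_pow_sub_pow_mul_of_mul_sub_mul_eq_smul h m),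
      fun h0 => hU ⟨m, h0⟩⟩
  have hinj : Function.Injective fun m : ℕ => (m : K) * c :=
    fun p q hpq => Nat.cast_injective (mul_right_cancel₀ hc hpq)
  have := (Module.End.eigenvectors_linearIndependent' _ _ hinj _ heig).finite
  exact not_finite ℕ

lemma IsNilpotent.exp_smul_of_pow_three_smul_eq_zero {A M : Type*} [Ring A] [Module ℚ A]
    [AddCommGroup M] [Module A M] [Module ℚ M] {a : A} {m : M} (ha : IsNilpotent a)
    (h : (a ^ 3) • m = 0) :
    IsNilpotent.exp a • m = m + a • m + (2 : ℚ)⁻¹ • a • a • m := by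
  rw [IsNilpotent.exp_smul_eq_sum h ha]
  simp [Finset.sum_range_succ, sq, mul_smul]

lemma disjoint_ker_range_of_sup_eq_top {K V : Type*} [Field K] [AddCommGroup V] [Module K V]
    [FiniteDimensional K V] {E F : Module.End K V}
    (hrank : Module.finrank K (range F) = Module.finrank K (range E))
    (h : ker E ⊔ range F = ⊤) : Disjoint (ker E) (range F) := by
  have hsum := Submodule.finrank_sup_add_finrank_inf_eq (ker E) (range F)
  rw [h, finrank_top] at hsum
  have := LinearMap.finrank_range_add_finrank_ker E
  exact disjoint_iff.2 (Submodule.finrank_eq_zero.1 (by omega))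

namespace LinearMap

variable {R M : Type*} [Ring R] [AddCommGroup M] [Module R M] {p q : Submodule R M}
  {π : M →ₗ[R] M}

lemma sup_eq_top_of_sub_mem (h₁ : ∀ a, π a ∈ p) (h₂ : ∀ a, a - π a ∈ q) :
    p ⊔ q = ⊤ :=
  eq_top_iff.2 fun a _ => Submodule.mem_sup.2 ⟨_, h₁ a, _, h₂ a, add_sub_cancel (π a) a⟩

lemma isProj_of_sub_mem (hpq : Disjoint p q) (h₁ : ∀ a, π a ∈ p)
    (h₂ : ∀ a, a - π a ∈ q) : IsProj p π where
  map_mem := h₁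
  map_id a ha := (sub_eq_zero.1 (Submodule.disjoint_def.1 hpq _
    (p.sub_mem ha (h₁ a)) (h₂ a))).symm

lemma ker_eq_of_sub_mem (hpq : Disjoint p q) (h₁ : ∀ a, π a ∈ p)
    (h₂ : ∀ a, a - π a ∈ q) : ker π = q := by
  ext a
  refine ⟨fun ha => by simpa [mem_ker.1 ha] using h₂ a, fun ha => ?_⟩
  have hq : π a ∈ q := by simpa using q.sub_mem ha (h₂ a)
  exact Submodule.disjoint_def.1 hpq _ (h₁ a) hq

lemma IsProj.comp_equiv (hπ : IsProj p π) (σ : M ≃ₗ[R] M) (hσ : ∀ a ∈ p, σ a = a) :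
    IsProj p (π ∘ₗ σ) where
  map_mem a := hπ.map_mem (σ a)
  map_id a ha := by rw [comp_apply, LinearEquiv.coe_coe, hσ a ha, hπ.map_id a ha]

end LinearMap

namespace LinearMap.BilinForm

lemma orthogonal_sup {R M : Type*} [CommRing R] [AddCommGroup M] [Module R M]
    (B : LinearMap.BilinForm R M) (W₁ W₂ : Submodule R M) :
    B.orthogonal (W₁ ⊔ W₂) = B.orthogonal W₁ ⊓ B.orthogonal W₂ := by
  refine le_antisymm (le_inf (B.orthogonal_le le_sup_left) (B.orthogonal_le le_sup_right)) ?_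
  rintro m ⟨h₁, h₂⟩ n hn
  obtain ⟨n₁, hn₁, n₂, hn₂, rfl⟩ := Submodule.mem_sup.1 hn
  rw [map_add, LinearMap.add_apply, h₁ n₁ hn₁, h₂ n₂ hn₂, add_zero]

lemma orthogonal_inf {K V : Type*} [Field K] [AddCommGroup V] [Module K V]
    [FiniteDimensional K V] {B : LinearMap.BilinForm K V} (hB : B.Nondegenerate) (hB₀ : B.IsRefl)
    (W₁ W₂ : Submodule K V) :
    B.orthogonal (W₁ ⊓ W₂) = B.orthogonal W₁ ⊔ B.orthogonal W₂ := by
  conv_lhs => rw [← orthogonal_orthogonal hB hB₀ W₁, ← orthogonal_orthogonal hB hB₀ W₂,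
    ← orthogonal_sup]
  exact orthogonal_orthogonal hB hB₀ _

end LinearMap.BilinForm

section InvariantForm

open LinearMap.BilinForm

variable {K g : Type*} [Field K] [LieRing g] [LieAlgebra K g] [FiniteDimensional K g]
  {B : LinearMap.BilinForm K g} (hBinv : ∀ a b c : g, B ⁅a, b⁆ c = B a ⁅b, c⁆)
  (hB : B.Nondegenerate)
include hBinv hB

lemma orthogonal_range_ad (z : g) :
    B.orthogonal (range (LieAlgebra.ad K g z)) = ker (LieAlgebra.ad K g z) := by
  have hle : ker (LieAlgebra.ad K g z) ≤ B.orthogonal (range (LieAlgebra.ad K g z)) := by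
    rintro m hm _ ⟨w, rfl⟩
    rw [LieAlgebra.ad_apply, ← lie_skew, map_neg, LinearMap.neg_apply, hBinv,
      ← LieAlgebra.ad_apply K, hm, map_zero, neg_zero]
  refine (Submodule.eq_of_le_of_finrank_le hle ?_).symm
  have := LinearMap.finrank_range_add_finrank_ker (LieAlgebra.ad K g z)
  rw [finrank_orthogonal hB]
  omega

variable (hB₀ : B.IsRefl)
include hB₀

lemma orthogonal_ker_ad (z : g) :
    B.orthogonal (ker (LieAlgebra.ad K g z)) = range (LieAlgebra.ad K g z) := by
  rw [← orthogonal_range_ad hBinv hB, orthogonal_orthogonal hB hB₀]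

lemma map_ad_orthogonal_range_ad_inf_ker_ad (z e : g) :
    (B.orthogonal (range (LieAlgebra.ad K g z) ⊓ ker (LieAlgebra.ad K g e))).map
        (LieAlgebra.ad K g z) = (range (LieAlgebra.ad K g e)).map (LieAlgebra.ad K g z) := by
  rw [orthogonal_inf hB hB₀, orthogonal_range_ad hBinv hB, orthogonal_ker_ad hBinv hB hB₀,
    Submodule.map_sup, LinearMap.le_ker_iff_map.1 le_rfl, bot_sup_eq]

lemma disjoint_range_ad_ker_ad_of_sup_eq_top {e f : g}
    (h : ker (LieAlgebra.ad K g e) ⊔ range (LieAlgebra.ad K g f) = ⊤) :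
    Disjoint (range (LieAlgebra.ad K g e)) (ker (LieAlgebra.ad K g f)) := by
  rw [disjoint_iff, ← orthogonal_ker_ad hBinv hB hB₀ e, ← orthogonal_range_ad hBinv hB f,
    ← orthogonal_sup, h, orthogonal_top_eq_bot hB]

end InvariantForm

lemma LieAlgebra.isNilpotent_ad_of_lie_eq_smul {K g : Type*} [Field K] [CharZero K] [LieRing g]
    [LieAlgebra K g] [FiniteDimensional K g] {x u : g} {c : K} (hc : c ≠ 0)
    (h : ⁅x, u⁆ = c • u) : IsNilpotent (ad K g u) :=
  isNilpotent_of_mul_sub_mul_eq_smul (X := ad K g x) hc (by ext y; simp [← lie_lie, h])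

lemma finrank_range_ad_lieEquiv_apply {K g : Type*} [Field K] [LieRing g] [LieAlgebra K g]
    (φ : g ≃ₗ⁅K⁆ g) (z : g) :
    Module.finrank K (range (LieAlgebra.ad K g (φ z))) =
      Module.finrank K (range (LieAlgebra.ad K g z)) := by
  rw [← LieAlgebra.conj_ad_apply, LinearEquiv.conj_apply, LinearMap.range_comp,
    LinearEquiv.range, Submodule.map_top, LinearMap.range_comp]
  exact LinearEquiv.finrank_map_eq _ _

/-- The `ℚ`-structure underlying a Lie algebra over a field of characteristic zero; it is needed
to exponentiate nilpotent derivations. -/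
noncomputable abbrev LieAlgebra.ratOfCharZero (K : Type*) [Field K] [CharZero K] {g : Type*}
    [LieRing g] [LieAlgebra K g] : LieAlgebra ℚ g :=
  letI := Module.compHom g (algebraMap ℚ K)
  { lie_smul := fun q x y => lie_smul (algebraMap ℚ K q) x y }

lemma LieDerivation.exp_ad_apply {R g : Type*} [CommRing R] [LieRing g] [LieAlgebra R g]
    [LieAlgebra ℚ g] {u : g} (hu : IsNilpotent (ad R g u).toLinearMap) {y : g}
    (hy : ⁅u, ⁅u, ⁅u, y⁆⁆⁆ = 0) :
    exp (ad R g u) hu y = y + ⁅u, y⁆ + (2 : ℚ)⁻¹ • ⁅u, ⁅u, y⁆⁆ := by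
  rw [exp_map_apply]
  simpa using hu.exp_smul_of_pow_three_smul_eq_zero (m := y) (by simpa [pow_succ] using hy)

lemma finrank_range_ad_eq_of_sl2 {K g : Type*} [Field K] [CharZero K] [LieRing g]
    [LieAlgebra K g] [FiniteDimensional K g] {e x f : g}
    (hxe : ⁅x, e⁆ = e) (hxf : ⁅x, f⁆ = -f) (hef : ⁅e, f⁆ = (2 : K) • x) :
    Module.finrank K (range (LieAlgebra.ad K g f)) =
      Module.finrank K (range (LieAlgebra.ad K g e)) := by
  let _ : LieAlgebra ℚ g := .ratOfCharZero K
  have half_two (v : g) : (2 : ℚ)⁻¹ • (2 : K) • v = v := by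
    rw [two_smul, ← two_smul ℚ, inv_smul_smul₀ two_ne_zero]
  have he : IsNilpotent (LieDerivation.ad K g e).toLinearMap := by
    simpa using LieAlgebra.isNilpotent_ad_of_lie_eq_smul (K := K) one_ne_zero
      (by rw [hxe, one_smul])
  have hf : IsNilpotent (LieDerivation.ad K g (-f)).toLinearMap := by
    simpa using LieAlgebra.isNilpotent_ad_of_lie_eq_smul (K := K) (x := x) (u := -f) (c := -1)
      (by simp) (by rw [lie_neg, hxf, neg_smul, one_smul])
  have hex : ⁅e, x⁆ = -e := by rw [← lie_skew, hxe]
  have hfx : ⁅-f, x⁆ = -f := by rw [neg_lie, ← lie_skew, hxf, neg_neg]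
  have hfe : ⁅-f, e⁆ = (2 : K) • x := by rw [neg_lie, ← lie_skew, neg_neg, hef]
  have h₁ : LieDerivation.exp _ he f = f + (2 : K) • x - e := by
    rw [LieDerivation.exp_ad_apply he (by simp [hef, hex]), hef, lie_smul, hex]
    simp only [smul_neg, half_two]
    abel
  have h₂ : LieDerivation.exp _ hf (f + (2 : K) • x - e) = -e := by
    rw [map_sub, map_add, map_smul, LieDerivation.exp_ad_apply hf (by simp),
      LieDerivation.exp_ad_apply hf (by simp [hfx]),
      LieDerivation.exp_ad_apply hf (by simp [hfe, hfx]), hfx, hfe, lie_smul, hfx]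
    simp only [neg_lie, lie_self, neg_zero, lie_zero, smul_zero, add_zero]
    module
  calc Module.finrank K (range (LieAlgebra.ad K g f))
      = Module.finrank K (range (LieAlgebra.ad K g
          (LieDerivation.exp _ hf (LieDerivation.exp _ he f)))) := by
        rw [finrank_range_ad_lieEquiv_apply, finrank_range_ad_lieEquiv_apply]
    _ = Module.finrank K (range (LieAlgebra.ad K g e)) := by
        rw [h₁, h₂, map_neg, LinearMap.range_neg]

lemma map_range_ad_add_eq_map_range {R g : Type*} [CommRing R] [LieRing g] [LieAlgebra R g]
    {e f r : g} {pf sg : Module.End R g}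
    (hinj : Set.InjOn (LieAlgebra.ad R g f) (range (LieAlgebra.ad R g e)))
    (hsg₁ : ∀ a, sg a ∈ range (LieAlgebra.ad R g e)) (hsg₂ : ∀ a, ⁅f, sg a⁆ = pf a)
    (hpf : ∀ b ∈ range (LieAlgebra.ad R g f), pf b = b) :
    (range (LieAlgebra.ad R g e)).map (LieAlgebra.ad R g (f + r)) =
      (range (LieAlgebra.ad R g f)).map (1 + LieAlgebra.ad R g r * sg) := by
  have hsg_lie (u : g) (hu : u ∈ range (LieAlgebra.ad R g e)) : sg ⁅f, u⁆ = u :=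
    hinj (hsg₁ _) hu (by rw [LieAlgebra.ad_apply, hsg₂]; exact hpf _ ⟨u, rfl⟩)
  ext c
  simp only [Submodule.mem_map, LinearMap.mem_range, LinearMap.add_apply, Module.End.one_apply,
    Module.End.mul_apply, LieAlgebra.ad_apply]
  constructor
  · rintro ⟨u, hu, rfl⟩
    refine ⟨⁅f, u⁆, ⟨u, rfl⟩, ?_⟩
    rw [hsg_lie u hu, add_lie]
  · rintro ⟨b, hb, rfl⟩
    refine ⟨sg b, hsg₁ b, ?_⟩
    rw [add_lie, hsg₂, hpf b hb]

theorem Phi_is_projection_onto_centralizer_general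
    {F : Type*} [Field F] [CharZero F]
    {g : Type*} [LieRing g] [LieAlgebra F g] [Module.Finite F g]
    (e x f : g)
    (hxe : ⁅x, e⁆ = e) (hxf : ⁅x, f⁆ = -f) (hef : ⁅e, f⁆ = (2 : F) • x)
    (B : LinearMap.BilinForm F g)
    (hBsymm : ∀ a b : g, B a b = B b a)
    (hBinv : ∀ a b c : g, B ⁅a, b⁆ c = B a ⁅b, c⁆)
    (hBnd : B.Nondegenerate)
    (r : g)
    (U : Submodule F g)
    (hU : ∀ a : g, a ∈ U ↔ ∀ v ∈ Submodule.map (LieAlgebra.ad F g (f + r)) ⊤ ⊓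
        LinearMap.ker (LieAlgebra.ad F g e), B a v = 0)
    (pf sg ps : Module.End F g)
    (hpf1 : ∀ a : g, pf a ∈ LinearMap.range (LieAlgebra.ad F g f))
    (hpf2 : ∀ a : g, a - pf a ∈ LinearMap.ker (LieAlgebra.ad F g e))
    (hsg1 : ∀ a : g, sg a ∈ LinearMap.range (LieAlgebra.ad F g e))
    (hsg2 : ∀ a : g, ⁅f, sg a⁆ = pf a)
    (hps1 : (1 + LieAlgebra.ad F g r * sg) * ps = 1)
    (hps2 : ps * (1 + LieAlgebra.ad F g r * sg) = 1)
    (Phi : Module.End F g) (hPhi : Phi = (1 - pf) * ps) :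
    IsCompl (LinearMap.ker (LieAlgebra.ad F g e))
        (Submodule.map (LieAlgebra.ad F g (f + r)) U) ∧
    (∀ a : g, Phi a ∈ LinearMap.ker (LieAlgebra.ad F g e)) ∧
    (∀ a ∈ LinearMap.ker (LieAlgebra.ad F g e), Phi a = a) ∧
    LinearMap.ker Phi = Submodule.map (LieAlgebra.ad F g (f + r)) U := by
  have hB₀ : B.IsRefl := fun a b h => (hBsymm b a).trans h
  have hπ₁ (a : g) : (1 - pf) a ∈ ker (LieAlgebra.ad F g e) := hpf2 a
  have hπ₂ (a : g) : a - (1 - pf) a ∈ range (LieAlgebra.ad F g f) := by simpa using hpf1 a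
  have hsup := LinearMap.sup_eq_top_of_sub_mem hπ₁ hπ₂
  have hdisj := disjoint_ker_range_of_sup_eq_top (finrank_range_ad_eq_of_sl2 hxe hxf hef) hsup
  have hinj : Set.InjOn (LieAlgebra.ad F g f) (range (LieAlgebra.ad F g e)) :=
    LinearMap.injOn_of_disjoint_ker le_rfl
      (disjoint_range_ad_ker_ad_of_sup_eq_top hBinv hBnd hB₀ hsup)
  let σ : g ≃ₗ[F] g := .ofLinearMap ps (1 + LieAlgebra.ad F g r * sg) hps2 hps1
  have hσ (a : g) (ha : a ∈ ker (LieAlgebra.ad F g e)) : σ a = a := by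
    have hsg : sg a = 0 := hinj (hsg1 a) (zero_mem _) <| by
      rw [map_zero, LieAlgebra.ad_apply, hsg2, ← LinearMap.mem_ker,
        LinearMap.ker_eq_of_sub_mem hdisj.symm hpf1 hpf2]
      exact ha
    show ps a = a
    simpa [hsg] using congr($hps2 a)
  have hproj : LinearMap.IsProj (ker (LieAlgebra.ad F g e)) Phi :=
    hPhi ▸ (LinearMap.isProj_of_sub_mem hdisj hπ₁ hπ₂).comp_equiv σ hσ
  have hU' : U = B.orthogonal (range (LieAlgebra.ad F g (f + r)) ⊓ ker (LieAlgebra.ad F g e)) :=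
    Submodule.ext fun a => (hU a).trans <| by
      rw [Submodule.map_top]
      exact forall₂_congr fun v _ => by rw [hBsymm]
  have hker : ker Phi = U.map (LieAlgebra.ad F g (f + r)) := by
    rw [hU', map_ad_orthogonal_range_ad_inf_ker_ad hBinv hBnd hB₀,
      map_range_ad_add_eq_map_range hinj hsg1 hsg2
        (LinearMap.isProj_of_sub_mem hdisj.symm hpf1 hpf2).map_id,
      hPhi, Module.End.mul_eq_comp, LinearMap.ker_comp,
      LinearMap.ker_eq_of_sub_mem hdisj hπ₁ hπ₂]
    exact Submodule.comap_equiv_eq_map_symm σ _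
  exact ⟨hker ▸ hproj.isCompl, hproj.map_mem, hproj.map_id, hker⟩

/-- with `V^{(r)} = { [f+r,a] : a ⊥ ([f+r,g] ∩ g^e) }` (here
`V^{(r)} = (ad (f+r))(U)` with `U` the orthogonal complement of `[f+r,g] ∩ g^e`),
one has `g = g^e ⊕ V^{(r)}`, and `Φ^{(r)} = π_{g^e}∘(1+(ad r)∘(ad f)^{-1}∘π_{[f,g]})^{-1}`
is the projection onto `g^e` with kernel `V^{(r)}`. -/
theorem Phi_is_projection_onto_centralizer
    {F : Type*} [Field F] [CharZero F]
    {g : Type*} [LieRing g] [LieAlgebra F g] [Module.Finite F g]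
    [LieAlgebra.IsSimple F g]
    (e x f : g)
    (hxe : ⁅x, e⁆ = e) (hxf : ⁅x, f⁆ = -f) (hef : ⁅e, f⁆ = (2 : F) • x)
    (B : LinearMap.BilinForm F g)
    (hBsymm : ∀ a b : g, B a b = B b a)
    (hBinv : ∀ a b c : g, B ⁅a, b⁆ c = B a ⁅b, c⁆)
    (hBnd : B.Nondegenerate)
    (r : g)
    (hr : r ∈ ⨆ k : ℚ, ⨆ _ : (0 : ℚ) ≤ k,
        Module.End.eigenspace (LieAlgebra.ad F g x) (k : F))
    (U : Submodule F g)
    (hU : ∀ a : g, a ∈ U ↔ ∀ v ∈ Submodule.map (LieAlgebra.ad F g (f + r)) ⊤ ⊓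
        LinearMap.ker (LieAlgebra.ad F g e), B a v = 0)
    (pf sg ps : Module.End F g)
    (hpf1 : ∀ a : g, pf a ∈ LinearMap.range (LieAlgebra.ad F g f))
    (hpf2 : ∀ a : g, a - pf a ∈ LinearMap.ker (LieAlgebra.ad F g e))
    (hsg1 : ∀ a : g, sg a ∈ LinearMap.range (LieAlgebra.ad F g e))
    (hsg2 : ∀ a : g, ⁅f, sg a⁆ = pf a)
    (hps1 : (1 + LieAlgebra.ad F g r * sg) * ps = 1)
    (hps2 : ps * (1 + LieAlgebra.ad F g r * sg) = 1)
    (Phi : Module.End F g) (hPhi : Phi = (1 - pf) * ps) :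
    IsCompl (LinearMap.ker (LieAlgebra.ad F g e))
        (Submodule.map (LieAlgebra.ad F g (f + r)) U) ∧
    (∀ a : g, Phi a ∈ LinearMap.ker (LieAlgebra.ad F g e)) ∧
    (∀ a ∈ LinearMap.ker (LieAlgebra.ad F g e), Phi a = a) ∧
    LinearMap.ker Phi = Submodule.map (LieAlgebra.ad F g (f + r)) U :=
  Phi_is_projection_onto_centralizer_general e x f hxe hxf hef B hBsymm hBinv hBnd r U hU pf sg ps
    hpf1 hpf2 hsg1 hsg2 hps1 hps2 Phi hPhi
end

section
/- Let g be a finite-dimensional Lie algebra with sl2-triple {e,h=2x,f} and nondegenerate invariant symmetric form. For each half-integer k with -d ≤ k ≤ d, the identity Σ_{(i,m)∈J_{k-1}} q^{m+1}_i ⊗ q^i_m = − Σ_{(j,n)∈J_{-k}} q^j_n ⊗ q^{n+1}_j holds in [e,g_{k-1}] ⊗ [e,g_{-k}], where {q^j_n} and {q^n_j} are the dual bases of g constructed from dual bases of g^f and g^e via powers of ad f and ad e. -/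
/-!
Normalised as in `q^n_j`, the vectors `(ad e)^n q_j` (`0 ≤ n ≤ 2δ(j)`) pair with the vectors
`q^j_n = (ad f)^n q^j` to the Kronecker delta: this is an sl₂-string computation with the invariant
form. They also span `g`. Their span `V` is stable under `ad h` and `ad f`, and `⁅f, v⁆ ∈ V` forces
`v ∈ V`, so `ad f` induces an invertible map `Y` on `g ⧸ V` with `[ad h, Y] = -2 Y`. Taking
traces in `Y⁻¹ (ad h) Y - ad h = -2` gives `dim (g ⧸ V) = 0`. In the resulting dual bases the
identity is compared coordinatewise. It reduces to `B(q^j_n, q^i_{m-1}) = -B(q^i_m, q^j_{n-1})`,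
which is the `ad f`-invariance of `B`. The `x`-weights show that the only pairs contributing are
those indexed by `J_{k-1}` and `J_{-k}`.
-/

open LieModule Finset

theorem Module.End.subsingleton_of_commutator_eq_smul_of_injective {K V : Type*} [Field K]
    [CharZero K] [AddCommGroup V] [Module K V] [FiniteDimensional K V] {X Y : Module.End K V}
    {c : K} (hc : c ≠ 0) (hXY : X * Y - Y * X = c • Y) (hY : Function.Injective Y) :
    Subsingleton V := by
  obtain ⟨u, rfl⟩ : IsUnit Y :=
    (Module.End.isUnit_iff Y).2 ⟨hY, LinearMap.injective_iff_surjective.1 hY⟩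
  have hconj : (↑u⁻¹ : Module.End K V) * (X * u) - X = c • 1 := by
    calc (↑u⁻¹ : Module.End K V) * (X * u) - X = ↑u⁻¹ * (X * u - u * X) := by
          rw [mul_sub, ← mul_assoc _ (u : Module.End K V), Units.inv_mul, one_mul]
      _ = c • 1 := by rw [hXY, mul_smul_comm, Units.inv_mul]
  have htrace := congrArg (LinearMap.trace K V) hconj
  rw [map_sub, LinearMap.trace_mul_comm, mul_assoc, Units.mul_inv, mul_one, sub_self,
    map_smul, LinearMap.trace_one, smul_eq_mul, eq_comm, mul_eq_zero] at htrace
  exact Module.finrank_zero_iff.1 (by exact_mod_cast htrace.resolve_left hc)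

theorem Submodule.eq_top_of_commutator_eq_smul {K V : Type*} [Field K] [CharZero K]
    [AddCommGroup V] [Module K V] [FiniteDimensional K V] {X Y : Module.End K V} {c : K}
    (hc : c ≠ 0) (hXY : X * Y - Y * X = c • Y) {W : Submodule K V} (hX : W ≤ W.comap X)
    (hY : W ≤ W.comap Y) (hYW : W.comap Y ≤ W) : W = ⊤ := by
  have hbar : W.mapQ W X hX * W.mapQ W Y hY - W.mapQ W Y hY * W.mapQ W X hX =
      c • W.mapQ W Y hY := by
    refine Submodule.linearMap_qext _ (LinearMap.ext fun v => ?_)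
    have := LinearMap.congr_fun hXY v
    simp only [LinearMap.sub_apply, Module.End.mul_apply, LinearMap.smul_apply] at this
    simp [Submodule.mapQ_apply, ← Submodule.Quotient.mk_sub, this]
  have hinj : Function.Injective (W.mapQ W Y hY) := by
    rw [← LinearMap.ker_eq_bot, Submodule.ker_mapQ, eq_bot_iff, Submodule.map_le_iff_le_comap,
      Submodule.comap_bot, Submodule.ker_mkQ]
    exact hYW
  exact Submodule.Quotient.subsingleton_iff.1
    (Module.End.subsingleton_of_commutator_eq_smul_of_injective hc hbar hinj)

namespace LinearMap.BilinForm

variable {R L M : Type*} [CommRing R] [LieRing L]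

theorem lieInvariant_of_apply_lie_eq [LieAlgebra R L] {B : LinearMap.BilinForm R L}
    (hB : ∀ a b c : L, B ⁅a, b⁆ c = B a ⁅b, c⁆) : B.lieInvariant L := fun a b c => by
  rw [← lie_skew, map_neg, LinearMap.neg_apply, hB]

variable [AddCommGroup M] [Module R M] [LieRingModule L M] {Φ : LinearMap.BilinForm R M}

theorem lieInvariant.apply_eq_zero_of_add_ne_zero [IsDomain R] (hΦ : Φ.lieInvariant L) {x : L}
    {y z : M} {μ ν : R} (hy : ⁅x, y⁆ = μ • y) (hz : ⁅x, z⁆ = ν • z) (hμν : μ + ν ≠ 0) :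
    Φ y z = 0 := by
  have h := hΦ x y z
  rw [hy, hz, map_smul, LinearMap.smul_apply, map_smul, smul_eq_mul, smul_eq_mul] at h
  exact (mul_eq_zero.1 (by linear_combination h : (μ + ν) * Φ y z = 0)).resolve_left hμν

variable [LieAlgebra R L] [LieModule R L M]

theorem lieInvariant.apply_pow_toEnd_left (hΦ : Φ.lieInvariant L) (x : L) (n : ℕ) (y z : M) :
    Φ ((toEnd R L M x ^ n) y) z = (-1) ^ n * Φ y ((toEnd R L M x ^ n) z) := by
  induction n generalizing y with
  | zero => simp
  | succ n ih =>
    conv_lhs => rw [pow_succ, Module.End.mul_apply]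
    rw [ih, toEnd_apply_apply, hΦ, pow_succ' (toEnd R L M x), Module.End.mul_apply,
      toEnd_apply_apply]
    ring

theorem lieInvariant.apply_pow_toEnd_right (hΦ : Φ.lieInvariant L) (x : L) (n : ℕ) (y z : M) :
    Φ y ((toEnd R L M x ^ n) z) = (-1) ^ n * Φ ((toEnd R L M x ^ n) y) z := by
  rw [hΦ.apply_pow_toEnd_left, ← mul_assoc, ← mul_pow, neg_one_mul, neg_neg, one_pow, one_mul]

end LinearMap.BilinForm

theorem prod_range_add_one_mul_sub_eq_factorial_sq_mul_choose (R : Type*) [CommRing R]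
    (n a : ℕ) : ∏ k ∈ range a, ((k + 1 : R) * (n - k)) = (a.factorial : R) ^ 2 * n.choose a := by
  rw [prod_mul_distrib, ← descPochhammer_eval_eq_prod_range, descPochhammer_eval_eq_descFactorial,
    Nat.descFactorial_eq_factorial_mul_choose, ← prod_range_add_one_eq_factorial]
  push_cast
  ring

namespace IsSl2Triple.HasPrimitiveVectorWith

section CommRing

variable {R L M : Type*} [CommRing R] [LieRing L] [LieAlgebra R L]
  [AddCommGroup M] [Module R M] [LieRingModule L M] [LieModule R L M]
  {h e f : L} {t : IsSl2Triple h e f} {m : M} {μ : R}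

theorem pow_toEnd_e_pow_toEnd_f (P : t.HasPrimitiveVectorWith m μ) (a c : ℕ) :
    (toEnd R L M e ^ a) ((toEnd R L M f ^ (a + c)) m) =
      (∏ k ∈ range a, ((c + k + 1 : R) * (μ - (c + k)))) • (toEnd R L M f ^ c) m := by
  induction a with
  | zero => simp
  | succ a ih =>
    rw [pow_succ, Module.End.mul_apply, add_right_comm, toEnd_apply_apply,
      add_comm a c, P.lie_e_pow_succ_toEnd_f, map_smul, add_comm c a, ih, smul_smul,
      prod_range_succ]
    push_cast
    ring_nf

theorem pow_toEnd_e_pow_toEnd_f_self {n : ℕ} (P : t.HasPrimitiveVectorWith m (n : R)) (a : ℕ) :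
    (toEnd R L M e ^ a) ((toEnd R L M f ^ a) m) = ((a.factorial : R) ^ 2 * n.choose a) • m := by
  have h := P.pow_toEnd_e_pow_toEnd_f a 0
  simp only [add_zero, pow_zero, Module.End.one_apply, Nat.cast_zero, zero_add] at h
  rw [h, prod_range_add_one_mul_sub_eq_factorial_sq_mul_choose]

theorem apply_pow_toEnd_e_pow_toEnd_f {Φ : LinearMap.BilinForm R M} (hΦ : Φ.lieInvariant L)
    {n : ℕ} (P : t.HasPrimitiveVectorWith m (n : R)) {m' : M} (hm' : ⁅f, m'⁆ = 0) (a b : ℕ) :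
    Φ ((toEnd R L M e ^ a) m') ((toEnd R L M f ^ b) m) =
      if a = b then (-1) ^ a * ((a.factorial : R) ^ 2 * n.choose a) * Φ m' m else 0 := by
  rw [hΦ.apply_pow_toEnd_left]
  rcases lt_trichotomy a b with hab | rfl | hab
  · obtain ⟨c, rfl⟩ := Nat.exists_eq_add_of_lt hab
    have hvanish : Φ m' ((toEnd R L M f ^ (c + 1)) m) = 0 := by
      rw [pow_succ', Module.End.mul_apply, toEnd_apply_apply, ← neg_eq_zero, ← hΦ, hm',
        map_zero, LinearMap.zero_apply]
    rw [if_neg hab.ne, add_assoc, P.pow_toEnd_e_pow_toEnd_f a (c + 1), map_smul, hvanish,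
      smul_zero, mul_zero]
  · rw [if_pos rfl, P.pow_toEnd_e_pow_toEnd_f_self, map_smul, smul_eq_mul]
    ring
  · obtain ⟨c, rfl⟩ := Nat.exists_eq_add_of_lt hab
    rw [if_neg hab.ne', show b + c + 1 = c + 1 + b by omega, pow_add (toEnd R L M e),
      Module.End.mul_apply, P.pow_toEnd_e_pow_toEnd_f_self, map_smul, pow_succ (toEnd R L M e),
      Module.End.mul_apply, toEnd_apply_apply, P.lie_e, map_zero, smul_zero, map_zero, mul_zero]

end CommRing

section Field

variable {K L M : Type*} [Field K] [CharZero K] [LieRing L] [LieAlgebra K L]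
  [AddCommGroup M] [Module K M] [LieRingModule L M] [LieModule K L M]
  {h e f : L} {t : IsSl2Triple h e f} {m : M}

theorem pow_toEnd_f_eq_zero_of_lt [Module.Finite K M] {n : ℕ}
    (P : t.HasPrimitiveVectorWith m (n : K)) {k : ℕ} (hk : n < k) :
    (toEnd K L M f ^ k) m = 0 := by
  obtain ⟨j, rfl⟩ := Nat.exists_eq_add_of_lt hk
  rw [add_right_comm, add_comm, pow_add, Module.End.mul_apply, P.pow_toEnd_f_eq_zero_of_eq_nat rfl,
    map_zero]

theorem eq_and_add_eq_of_apply_pow_toEnd_f_ne_zero [Module.Finite K M]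
    {Φ : LinearMap.BilinForm K M} (hΦ : Φ.lieInvariant L) {m' : M} {n n' : ℕ}
    (P : t.HasPrimitiveVectorWith m (n : K)) (P' : t.HasPrimitiveVectorWith m' (n' : K)) {a b : ℕ}
    (hne : Φ ((toEnd K L M f ^ a) m) ((toEnd K L M f ^ b) m') ≠ 0) : n = n' ∧ a + b = n := by
  have hle' : a + b ≤ n' := by
    by_contra hlt
    rw [hΦ.apply_pow_toEnd_left, ← Module.End.mul_apply, ← pow_add,
      P'.pow_toEnd_f_eq_zero_of_lt (by omega), map_zero, mul_zero] at hne
    exact hne rfl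
  have hle : a + b ≤ n := by
    by_contra hlt
    rw [hΦ.apply_pow_toEnd_right, ← Module.End.mul_apply, ← pow_add,
      P.pow_toEnd_f_eq_zero_of_lt (by omega), map_zero, LinearMap.zero_apply, mul_zero] at hne
    exact hne rfl
  have hweight : ((n : K) - 2 * a) + ((n' : K) - 2 * b) = 0 := by
    by_contra hsum
    exact hne
      (hΦ.apply_eq_zero_of_add_ne_zero (P.lie_h_pow_toEnd_f a) (P'.lie_h_pow_toEnd_f b) hsum)
  have hcast : n + n' = 2 * (a + b) := by
    exact_mod_cast (by linear_combination hweight : (n + n' : K) = 2 * (a + b))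
  omega

end Field

end IsSl2Triple.HasPrimitiveVectorWith

section DualStrings

variable {K L M ι : Type*} [Field K] [LieRing L] [LieAlgebra K L]
  [AddCommGroup M] [Module K M] [LieRingModule L M] [LieModule K L M]

/- `fString K f qe j n` is the paper's `q^j_n` and `eStringDual K e qf D j n` is `q^n_j`, with
`D j = 2δ(j)`. For `n > D j` the binomial coefficient vanishes, and since `x / 0 = 0`
`eStringDual` is then `0`. -/
variable (K) in
def fString (f : L) (qe : ι → M) (j : ι) (n : ℕ) : M :=
  (toEnd K L M f ^ n) (qe j)

variable (K) in
def eStringDual (e : L) (qf : ι → M) (D : ι → ℕ) (j : ι) (n : ℕ) : M :=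
  ((-1 : K) ^ n / ((n.factorial : K) ^ 2 * (D j).choose n)) • (toEnd K L M e ^ n) (qf j)

variable (K) in
abbrev eStringSpan (e : L) (qf : ι → M) (D : ι → ℕ) : Submodule K M :=
  Submodule.span K (Set.range fun s : Σ j, Fin (D j + 1) => eStringDual K e qf D s.1 s.2)

variable {h e f : L} {t : IsSl2Triple h e f} {t' : IsSl2Triple (-h) f e}
  {Φ : LinearMap.BilinForm K M}
  {qf qe : ι → M} {D : ι → ℕ}

theorem lie_fString (j : ι) (n : ℕ) : ⁅f, fString K f qe j n⁆ = fString K f qe j (n + 1) := by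
  rw [fString, fString, pow_succ', Module.End.mul_apply, toEnd_apply_apply]

theorem eStringDual_eq_zero_of_lt {j : ι} {n : ℕ} (hn : D j < n) :
    eStringDual K e qf D j n = 0 := by
  simp [eStringDual, Nat.choose_eq_zero_of_lt hn]

theorem lie_f_eStringDual_zero (Pf : ∀ j, t'.HasPrimitiveVectorWith (qf j) (D j : K)) (j : ι) :
    ⁅f, eStringDual K e qf D j 0⁆ = 0 := by
  simp [eStringDual, (Pf j).lie_e]

theorem lie_h_eStringDual (Pf : ∀ j, t'.HasPrimitiveVectorWith (qf j) (D j : K)) (j : ι)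
    (n : ℕ) : ⁅h, eStringDual K e qf D j n⁆ = (2 * n - D j : K) • eStringDual K e qf D j n := by
  have hweight := (Pf j).lie_h_pow_toEnd_f n
  rw [neg_lie, neg_eq_iff_eq_neg, ← neg_smul, neg_sub] at hweight
  rw [eStringDual, lie_smul, hweight, smul_comm]

variable [CharZero K]

theorem lie_f_eStringDual_succ (Pf : ∀ j, t'.HasPrimitiveVectorWith (qf j) (D j : K)) {j : ι}
    {n : ℕ} (hn : n < D j) : ⁅f, eStringDual K e qf D j (n + 1)⁆ = -eStringDual K e qf D j n := by
  rw [eStringDual, eStringDual, lie_smul, (Pf j).lie_e_pow_succ_toEnd_f, smul_smul, ← neg_smul]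
  congr 1
  have hchoose : ((D j).choose (n + 1) : K) * (n + 1) = (D j).choose n * (D j - n) := by
    rw [← Nat.cast_sub hn.le]
    exact_mod_cast Nat.choose_succ_right_eq (D j) n
  have hC : ((D j).choose n : K) ≠ 0 := Nat.cast_ne_zero.2 (Nat.choose_pos hn.le).ne'
  have hC' : ((D j).choose (n + 1) : K) ≠ 0 := Nat.cast_ne_zero.2 (Nat.choose_pos hn).ne'
  have hDn : (D j : K) - n ≠ 0 := sub_ne_zero.2 (by exact_mod_cast hn.ne')
  have hfac : (n.factorial : K) ≠ 0 := Nat.cast_ne_zero.2 n.factorial_ne_zero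
  rw [Nat.factorial_succ]
  push_cast
  field_simp
  linear_combination (-1 : K) ^ n * hchoose

theorem apply_fString_eStringDual [DecidableEq ι] (hΦ : Φ.lieInvariant L)
    (hqe : ∀ j, ⁅e, qe j⁆ = 0) (Pf : ∀ j, t'.HasPrimitiveVectorWith (qf j) (D j : K))
    (hdual : ∀ i j, Φ (qe i) (qf j) = if i = j then 1 else 0) {i : ι} {a : ℕ} (ha : a ≤ D i)
    (j : ι) (b : ℕ) :
    Φ (fString K f qe i a) (eStringDual K e qf D j b) = if i = j ∧ a = b then 1 else 0 := by
  by_cases hb : b ≤ D j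
  · rw [fString, eStringDual, map_smul, smul_eq_mul,
      (Pf j).apply_pow_toEnd_e_pow_toEnd_f hΦ (hqe i), hdual]
    rcases eq_or_ne a b with rfl | hab
    · rcases eq_or_ne i j with rfl | hij
      · have hC : ((D i).choose a : K) ≠ 0 := Nat.cast_ne_zero.2 (Nat.choose_pos hb).ne'
        have hfac : (a.factorial : K) ≠ 0 := Nat.cast_ne_zero.2 a.factorial_ne_zero
        simp only [if_true, and_self, mul_one]
        field_simp
        rw [← pow_mul, mul_comm, pow_mul, neg_one_sq, one_pow]
      · simp [hij]
    · simp [hab]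
  · rw [eStringDual_eq_zero_of_lt (by omega), map_zero, if_neg (by rintro ⟨rfl, rfl⟩; omega)]

theorem apply_fString_sum_eStringDual [Fintype ι] [DecidableEq ι] (hΦ : Φ.lieInvariant L)
    (hqe : ∀ j, ⁅e, qe j⁆ = 0) (Pf : ∀ j, t'.HasPrimitiveVectorWith (qf j) (D j : K))
    (hdual : ∀ i j, Φ (qe i) (qf j) = if i = j then 1 else 0)
    (c : (Σ j, Fin (D j + 1)) → K) (s : Σ j, Fin (D j + 1)) :
    Φ (fString K f qe s.1 s.2) (∑ u, c u • eStringDual K e qf D u.1 u.2) = c s := by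
  have hsigma : ∀ u : Σ j, Fin (D j + 1), (s.1 = u.1 ∧ (s.2 : ℕ) = u.2) ↔ s = u := fun u =>
    (and_congr_right fun h => (Fin.heq_ext_iff (by rw [h])).symm).trans Sigma.ext_iff.symm
  have hpair := apply_fString_eStringDual hΦ hqe Pf hdual (Nat.lt_succ_iff.1 s.2.2)
  simp only [map_sum, map_smul, smul_eq_mul, hpair, hsigma, mul_ite,
    mul_one, mul_zero, sum_ite_eq, mem_univ, if_true]

theorem linearIndependent_eStringDual [Fintype ι] [DecidableEq ι] (hΦ : Φ.lieInvariant L)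
    (hqe : ∀ j, ⁅e, qe j⁆ = 0) (Pf : ∀ j, t'.HasPrimitiveVectorWith (qf j) (D j : K))
    (hdual : ∀ i j, Φ (qe i) (qf j) = if i = j then 1 else 0) :
    LinearIndependent K fun s : Σ j, Fin (D j + 1) => eStringDual K e qf D s.1 s.2 :=
  Fintype.linearIndependent_iff.2 fun c hc s => by
    rw [← apply_fString_sum_eStringDual hΦ hqe Pf hdual c s, hc, map_zero]

omit [CharZero K] in
theorem eStringDual_mem_eStringSpan (j : ι) (n : ℕ) :
    eStringDual K e qf D j n ∈ eStringSpan K e qf D := by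
  rcases le_or_gt n (D j) with hn | hn
  · exact Submodule.subset_span ⟨⟨j, ⟨n, Nat.lt_succ_of_le hn⟩⟩, rfl⟩
  · rw [eStringDual_eq_zero_of_lt hn]
    exact zero_mem _

theorem mem_eStringSpan_of_lie_f_mem [Fintype ι] [DecidableEq ι] [Module.Finite K M]
    (hΦ : Φ.lieInvariant L) (Pe : ∀ j, t.HasPrimitiveVectorWith (qe j) (D j : K))
    (Pf : ∀ j, t'.HasPrimitiveVectorWith (qf j) (D j : K))
    (hdual : ∀ i j, Φ (qe i) (qf j) = if i = j then 1 else 0)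
    (hker : LinearMap.ker (toEnd K L M f) ≤ Submodule.span K (Set.range qf)) {v : M}
    (hv : ⁅f, v⁆ ∈ eStringSpan K e qf D) : v ∈ eStringSpan K e qf D := by
  obtain ⟨c, hc⟩ := (Submodule.mem_span_range_iff_exists_fun K).1 hv
  have htop : ∀ j, c ⟨j, Fin.last (D j)⟩ = 0 := fun j => by
    rw [← apply_fString_sum_eStringDual hΦ (fun j => (Pe j).lie_e) Pf hdual c, hc, ← neg_eq_zero,
      ← hΦ, lie_fString, Fin.val_last, fString,
      (Pe j).pow_toEnd_f_eq_zero_of_lt (Nat.lt_succ_self _), map_zero, LinearMap.zero_apply]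
  -- `⁅f, v⁆` has no component at the tops of the strings, so shifting each string up by one
  -- gives `w` in the span with `⁅f, w⁆ = -⁅f, v⁆`.
  set w := ∑ s : Σ j, Fin (D j + 1), c s • eStringDual K e qf D s.1 (s.2 + 1)
  have hlift : ⁅f, w⁆ = -⁅f, v⁆ := by
    rw [← hc, lie_sum, ← sum_neg_distrib]
    refine sum_congr rfl fun ⟨j, n⟩ _ => ?_
    rw [lie_smul]
    rcases (Nat.lt_succ_iff.1 n.2).lt_or_eq with hn | hn
    · rw [lie_f_eStringDual_succ Pf hn, smul_neg]
    · obtain rfl : n = Fin.last (D j) := Fin.ext hn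
      rw [htop, zero_smul, zero_smul, neg_zero]
  have hkerV : LinearMap.ker (toEnd K L M f) ≤ eStringSpan K e qf D := by
    refine hker.trans (Submodule.span_le.2 ?_)
    rintro _ ⟨j, rfl⟩
    simpa [eStringDual] using eStringDual_mem_eStringSpan (K := K) (e := e) (qf := qf) (D := D) j 0
  have hvw : v + w ∈ _ := hkerV (by
    rw [LinearMap.mem_ker, toEnd_apply_apply, lie_add, hlift, add_neg_cancel])
  have hw : w ∈ _ :=
    Submodule.sum_mem _ fun s _ => Submodule.smul_mem _ _ (eStringDual_mem_eStringSpan _ _)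
  simpa using Submodule.sub_mem _ hvw hw

theorem eStringSpan_eq_top [Fintype ι] [DecidableEq ι] [FiniteDimensional K M]
    (hΦ : Φ.lieInvariant L) (Pe : ∀ j, t.HasPrimitiveVectorWith (qe j) (D j : K))
    (Pf : ∀ j, t'.HasPrimitiveVectorWith (qf j) (D j : K))
    (hdual : ∀ i j, Φ (qe i) (qf j) = if i = j then 1 else 0)
    (hker : LinearMap.ker (toEnd K L M f) ≤ Submodule.span K (Set.range qf)) :
    eStringSpan K e qf D = ⊤ := by
  refine Submodule.eq_top_of_commutator_eq_smul (X := toEnd K L M h) (Y := toEnd K L M f) (c := -2)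
    (by norm_num) ?_ ?_ ?_ fun v hv => mem_eStringSpan_of_lie_f_mem hΦ Pe Pf hdual hker hv
  · refine LinearMap.ext fun v => ?_
    rw [LinearMap.sub_apply, Module.End.mul_apply, Module.End.mul_apply, LinearMap.smul_apply]
    simp only [toEnd_apply_apply]
    rw [← lie_lie, t.lie_lie_smul_f K, neg_lie, smul_lie, neg_smul]
  · rw [Submodule.span_le]
    rintro _ ⟨⟨j, n⟩, rfl⟩
    rw [SetLike.mem_coe, Submodule.mem_comap, toEnd_apply_apply, lie_h_eStringDual Pf]
    exact Submodule.smul_mem _ _ (eStringDual_mem_eStringSpan _ _)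
  · rw [Submodule.span_le]
    rintro _ ⟨⟨j, ⟨_ | n, hn⟩⟩, rfl⟩
    · rw [SetLike.mem_coe, Submodule.mem_comap, toEnd_apply_apply, lie_f_eStringDual_zero Pf]
      exact zero_mem _
    · rw [SetLike.mem_coe, Submodule.mem_comap, toEnd_apply_apply,
        lie_f_eStringDual_succ Pf (Nat.succ_lt_succ_iff.1 hn)]
      exact Submodule.neg_mem _ (eStringDual_mem_eStringSpan _ _)

theorem exists_basis_repr_eq_apply_fString [Fintype ι] [DecidableEq ι] [FiniteDimensional K M]
    (hΦ : Φ.lieInvariant L) (Pe : ∀ j, t.HasPrimitiveVectorWith (qe j) (D j : K))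
    (Pf : ∀ j, t'.HasPrimitiveVectorWith (qf j) (D j : K))
    (hdual : ∀ i j, Φ (qe i) (qf j) = if i = j then 1 else 0)
    (hker : LinearMap.ker (toEnd K L M f) ≤ Submodule.span K (Set.range qf)) :
    ∃ b : Module.Basis (Σ j, Fin (D j + 1)) K M,
      ∀ u s, b.repr u s = Φ (fString K f qe s.1 s.2) u := by
  let b := Module.Basis.mk (linearIndependent_eStringDual hΦ (fun j => (Pe j).lie_e) Pf hdual)
    (eStringSpan_eq_top hΦ Pe Pf hdual hker).ge
  refine ⟨b, fun u s => ?_⟩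
  conv_rhs => rw [← b.sum_repr u]
  simp only [b, Module.Basis.mk_apply,
    apply_fString_sum_eStringDual hΦ (fun j => (Pe j).lie_e) Pf hdual]

omit [CharZero K] in
theorem apply_fString_succ_right (hΦ : Φ.lieInvariant L) (i j : ι) (a b : ℕ) :
    Φ (fString K f qe i a) (fString K f qe j (b + 1)) =
      -Φ (fString K f qe i (a + 1)) (fString K f qe j b) := by
  rw [← lie_fString, ← lie_fString, hΦ, neg_neg]

-- A nonzero pairing of two `f`-strings forces, by weights, the condition on the other side.
theorem ite_apply_fString_eq_neg_ite [Module.Finite K M] (hΦ : Φ.lieInvariant L)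
    (hΦsymm : ∀ u v, Φ u v = Φ v u) (Pe : ∀ j, t.HasPrimitiveVectorWith (qe j) (D j : K))
    {i j : ι} {m n : ℕ} (hm : m ≤ D i) (hn : n ≤ D j) (k : ℤ) :
    (if -(D i : ℤ) ≤ 2 - k ∧ 2 - k ≤ (D i : ℤ) ∧ ((D i : ℤ) - (2 - k)) % 2 = 0 ∧
          m = ((D i : ℤ) - (2 - k)).toNat / 2 + 1 then
        Φ (fString K f qe j n) (fString K f qe i (((D i : ℤ) - (2 - k)).toNat / 2)) else 0) =
      -if -(D j : ℤ) ≤ k ∧ k ≤ (D j : ℤ) ∧ ((D j : ℤ) - k) % 2 = 0 ∧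
          n = ((D j : ℤ) - k).toNat / 2 + 1 then
        Φ (fString K f qe i m) (fString K f qe j (((D j : ℤ) - k).toNat / 2)) else 0 := by
  split_ifs with hL hR hR
  · rw [hL.2.2.2, hR.2.2.2, hΦsymm, apply_fString_succ_right hΦ]
  · rw [neg_zero]
    by_contra hne
    have := (Pe j).eq_and_add_eq_of_apply_pow_toEnd_f_ne_zero hΦ (Pe i) hne
    omega
  · rw [eq_comm, neg_eq_zero]
    by_contra hne
    have := (Pe i).eq_and_add_eq_of_apply_pow_toEnd_f_ne_zero hΦ (Pe j) hne
    omega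
  · rw [neg_zero]

theorem sum_eStringDual_tmul_fString_eq_neg [Fintype ι] [DecidableEq ι] [FiniteDimensional K M]
    (hΦ : Φ.lieInvariant L) (hΦsymm : ∀ u v, Φ u v = Φ v u)
    (Pe : ∀ j, t.HasPrimitiveVectorWith (qe j) (D j : K))
    (Pf : ∀ j, t'.HasPrimitiveVectorWith (qf j) (D j : K))
    (hdual : ∀ i j, Φ (qe i) (qf j) = if i = j then 1 else 0)
    (hker : LinearMap.ker (toEnd K L M f) ≤ Submodule.span K (Set.range qf)) (k : ℤ) :
    (∑ i ∈ univ.filter (fun i : ι =>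
        -(D i : ℤ) ≤ 2 - k ∧ 2 - k ≤ (D i : ℤ) ∧ ((D i : ℤ) - (2 - k)) % 2 = 0),
      eStringDual K e qf D i (((D i : ℤ) - (2 - k)).toNat / 2 + 1) ⊗ₜ[K]
        fString K f qe i (((D i : ℤ) - (2 - k)).toNat / 2)) =
    -∑ j ∈ univ.filter (fun j : ι =>
        -(D j : ℤ) ≤ k ∧ k ≤ (D j : ℤ) ∧ ((D j : ℤ) - k) % 2 = 0),
      fString K f qe j (((D j : ℤ) - k).toNat / 2) ⊗ₜ[K]
        eStringDual K e qf D j (((D j : ℤ) - k).toNat / 2 + 1) := by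
  obtain ⟨b, hb⟩ := exists_basis_repr_eq_apply_fString hΦ Pe Pf hdual hker
  refine (b.tensorProduct b).repr.injective (Finsupp.ext fun ⟨⟨i, m⟩, ⟨j, n⟩⟩ => ?_)
  have hpair := fun {i : ι} {m : ℕ} (hm : m < D i + 1) =>
    apply_fString_eStringDual hΦ (fun j => (Pe j).lie_e) Pf hdual (Nat.lt_succ_iff.1 hm)
  simp only [map_sum, map_neg, Finsupp.finsetSum_apply, Finsupp.neg_apply,
    Module.Basis.tensorProduct_repr_tmul_apply, hb, smul_eq_mul, hpair m.2, hpair n.2, ite_and,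
    ite_mul, mul_ite, one_mul, zero_mul, mul_one, mul_zero, sum_ite_eq, mem_filter, mem_univ,
    true_and]
  simp only [← ite_and]
  exact ite_apply_fString_eq_neg_ite hΦ hΦsymm Pe (Nat.lt_succ_iff.1 m.2) (Nat.lt_succ_iff.1 n.2) k

end DualStrings

-- `K` encodes `2k`.
theorem tensor_dual_bases_identity_general
    {F : Type*} [Field F] [CharZero F]
    {g : Type*} [LieRing g] [LieAlgebra F g] [Module.Finite F g]
    (e x f : g)
    (hxe : ⁅x, e⁆ = e) (hxf : ⁅x, f⁆ = -f) (hef : ⁅e, f⁆ = (2 : F) • x)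
    (B : LinearMap.BilinForm F g)
    (hBsymm : ∀ a b : g, B a b = B b a)
    (hBinv : ∀ a b c : g, B ⁅a, b⁆ c = B a ⁅b, c⁆)
    {ι : Type*} [Fintype ι] [DecidableEq ι]
    (qf qe : ι → g) (D : ι → ℕ)
    (hqf : ∀ j, ⁅f, qf j⁆ = 0)
    (hqfx : ∀ j, ⁅x, qf j⁆ = -(((D j : F) / 2) • qf j))
    (hqe : ∀ j, ⁅e, qe j⁆ = 0)
    (hqex : ∀ j, ⁅x, qe j⁆ = ((D j : F) / 2) • qe j)
    (hdual : ∀ i j, B (qf i) (qe j) = if i = j then 1 else 0)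
    (hspan : Submodule.span F (Set.range qf) = LinearMap.ker (LieAlgebra.ad F g f))
    (Qup Qdn : ι → ℕ → g)
    (hQup : ∀ j n, Qup j n = ((LieAlgebra.ad F g f) ^ n) (qe j))
    (hQdn : ∀ j n, Qdn j n =
      ((-1 : F) ^ n / ((n.factorial : F) ^ 2 * ((D j).choose n : F))) •
        (((LieAlgebra.ad F g e) ^ n) (qf j)))
    (K : ℤ) :
    (∑ i ∈ Finset.univ.filter (fun i : ι =>
        -(D i : ℤ) ≤ 2 - K ∧ 2 - K ≤ (D i : ℤ) ∧ ((D i : ℤ) - (2 - K)) % 2 = 0),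
      Qdn i (((D i : ℤ) - (2 - K)).toNat / 2 + 1) ⊗ₜ[F]
        Qup i (((D i : ℤ) - (2 - K)).toNat / 2)) =
    -∑ j ∈ Finset.univ.filter (fun j : ι =>
        -(D j : ℤ) ≤ K ∧ K ≤ (D j : ℤ) ∧ ((D j : ℤ) - K) % 2 = 0),
      Qup j (((D j : ℤ) - K).toNat / 2) ⊗ₜ[F]
        Qdn j (((D j : ℤ) - K).toNat / 2 + 1) := by
  -- `IsSl2Triple` needs `h ≠ 0`; if `x = 0` then `e = 0` and each term has a factor `(ad e)^(n+1)`.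
  rcases eq_or_ne x 0 with rfl | hx
  · have he : e = 0 := by rw [← hxe, zero_lie]
    simp [hQdn, he]
  have t : IsSl2Triple ((2 : F) • x) e f :=
    { h_ne_zero := smul_ne_zero two_ne_zero hx
      lie_e_f := hef
      lie_h_e_nsmul := by rw [smul_lie, hxe, ofNat_smul_eq_nsmul]
      lie_h_f_nsmul := by rw [smul_lie, hxf, smul_neg, ofNat_smul_eq_nsmul] }
  have hqe_ne : ∀ j, qe j ≠ 0 := fun j hj => by simpa [hj] using hdual j j
  have hqf_ne : ∀ j, qf j ≠ 0 := fun j hj => by simpa [hj] using hdual j j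
  have Pe : ∀ j, t.HasPrimitiveVectorWith (qe j) (D j : F) := fun j =>
    ⟨hqe_ne j, by rw [smul_lie, hqex, smul_smul]; ring_nf, hqe j⟩
  have Pf : ∀ j, t.symm.HasPrimitiveVectorWith (qf j) (D j : F) := fun j =>
    ⟨hqf_ne j, by rw [neg_lie, smul_lie, hqfx, smul_neg, neg_neg, smul_smul]; ring_nf, hqf j⟩
  have hdual' : ∀ i j, B (qe i) (qf j) = if i = j then 1 else 0 := fun i j => by
    simp only [hBsymm (qe i), hdual, eq_comm]
  obtain rfl : Qup = fString F f qe := funext fun j => funext (hQup j)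
  obtain rfl : Qdn = eStringDual F e qf D := funext fun j => funext (hQdn j)
  exact sum_eStringDual_tmul_fString_eq_neg (LinearMap.BilinForm.lieInvariant_of_apply_lie_eq hBinv)
    hBsymm Pe Pf hdual' hspan.ge K

/-- for each half-integer `k` with `-d ≤ k ≤ d` (encoded by `K = 2k`),
`Σ_{(i,m)∈J_{k-1}} q^{m+1}_i ⊗ q^i_m = − Σ_{(j,n)∈J_{-k}} q^j_n ⊗ q^{n+1}_j`,
where `Qup j n = (ad f)^n q^j` and `Qdn j n = ((-1)^n/((n!)^2 C(2δ(j),n))) (ad e)^n q_j`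
are the dual bases of `g` built from dual bases `{q_j}` of `g^f` and `{q^j}` of `g^e`
(`D j = 2δ(j)`), and `(j,n) ∈ J_{-k}` means `2n = D j - K` with `0 ≤ n ≤ D j`. -/
theorem tensor_dual_bases_identity
    {F : Type*} [Field F] [CharZero F]
    {g : Type*} [LieRing g] [LieAlgebra F g] [Module.Finite F g]
    (e x f : g)
    (hxe : ⁅x, e⁆ = e) (hxf : ⁅x, f⁆ = -f) (hef : ⁅e, f⁆ = (2 : F) • x)
    (B : LinearMap.BilinForm F g)
    (hBsymm : ∀ a b : g, B a b = B b a)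
    (hBinv : ∀ a b c : g, B ⁅a, b⁆ c = B a ⁅b, c⁆)
    (hBnd : B.Nondegenerate)
    {ι : Type*} [Fintype ι] [DecidableEq ι]
    (qf qe : ι → g) (D : ι → ℕ)
    (hqf : ∀ j, ⁅f, qf j⁆ = 0)
    (hqfx : ∀ j, ⁅x, qf j⁆ = -(((D j : F) / 2) • qf j))
    (hqe : ∀ j, ⁅e, qe j⁆ = 0)
    (hqex : ∀ j, ⁅x, qe j⁆ = ((D j : F) / 2) • qe j)
    (hdual : ∀ i j, B (qf i) (qe j) = if i = j then 1 else 0)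
    (hspan : Submodule.span F (Set.range qf) = LinearMap.ker (LieAlgebra.ad F g f))
    (Qup Qdn : ι → ℕ → g)
    (hQup : ∀ j n, Qup j n = ((LieAlgebra.ad F g f) ^ n) (qe j))
    (hQdn : ∀ j n, Qdn j n =
      ((-1 : F) ^ n / ((n.factorial : F) ^ 2 * ((D j).choose n : F))) •
        (((LieAlgebra.ad F g e) ^ n) (qf j)))
    (dd : ℕ) (hD : ∀ j, D j ≤ 2 * dd)
    (K : ℤ) (hK1 : -(2 * (dd : ℤ)) ≤ K) (hK2 : K ≤ 2 * dd) :
    (∑ i ∈ Finset.univ.filter (fun i : ι =>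
        -(D i : ℤ) ≤ 2 - K ∧ 2 - K ≤ (D i : ℤ) ∧ ((D i : ℤ) - (2 - K)) % 2 = 0),
      Qdn i (((D i : ℤ) - (2 - K)).toNat / 2 + 1) ⊗ₜ[F]
        Qup i (((D i : ℤ) - (2 - K)).toNat / 2)) =
    -∑ j ∈ Finset.univ.filter (fun j : ι =>
        -(D j : ℤ) ≤ K ∧ K ≤ (D j : ℤ) ∧ ((D j : ℤ) - K) % 2 = 0),
      Qup j (((D j : ℤ) - K).toNat / 2) ⊗ₜ[F]
        Qdn j (((D j : ℤ) - K).toNat / 2 + 1) :=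
  tensor_dual_bases_identity_general e x f hxe hxf hef B hBsymm hBinv qf qe D hqf hqfx hqe hqex
    hdual hspan Qup Qdn hQup hQdn K
end

section
/- Let g be a finite-dimensional simple Lie algebra with sl2-triple {e,h=2x,f} and f principal nilpotent. Then for every p, q ∈ g^f and every r ∈ g^e, the induced Poisson bracket on the Slodowy slice vanishes: (p | Φ^{(r)}([q,r])) = 0. Equivalently, the classical finite W-algebra of a principal nilpotent has zero Poisson bracket on its generators, recovering Kostant's theorem. -/
/-!
Put `N = 1 + (ad r) ∘ (ad f)⁻¹ ∘ π_{[f,g]}`, so that `Φ^{(r)} = π_{g^e} ∘ N⁻¹`. On `[f, g]` one has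
`N u = [f + r, (ad f)⁻¹ u]`, so `N [f, g] ⊆ [f + r, g]`; as `N` is injective and `f` is principal,
`dim N [f, g] = dim [f, g] ≥ dim [f + r, g]`, hence `N [f, g] = [f + r, g]`. For `q ∈ g^f`,
`[q, r] = [f + r, -q]`, so `N⁻¹ [q, r] ∈ [f, g]`, which `π_{g^e}` kills. That `[f, g] ∩ g^e = 0`
comes from `dim g^e = dim g^f`: the Weyl automorphism `exp (ad e) exp (-ad f) exp (ad e)` maps
`f` to `-e`.
-/

open Module LinearMap LieAlgebra

attribute [local instance] LieRing.ofAssociativeRing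

theorem Module.End.isNilpotent_of_lie_eq_self {K V : Type*} [Field K] [CharZero K]
    [AddCommGroup V] [Module K V] [Module.Finite K V] {X A : Module.End K V}
    (h : ⁅X, A⁆ = A) : IsNilpotent A := by
  by_contra hA
  have leibniz : ∀ P Q : Module.End K V, ⁅X, P * Q⁆ = ⁅X, P⁆ * Q + P * ⁅X, Q⁆ := by
    intro P Q
    simp only [Ring.lie_def]
    noncomm_ring
  have eigen : ∀ n : ℕ, ⁅X, A ^ (n + 1)⁆ = ((n + 1 : ℕ) : K) • A ^ (n + 1) := by
    intro n
    induction n with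
    | zero => simpa using h
    | succ n ih =>
      rw [pow_succ, leibniz, ih, h, smul_mul_assoc]
      push_cast
      module
  -- the powers of `A` would be eigenvectors of `ad X` for the infinitely many eigenvalues `n + 1`
  have hev : ∀ n : ℕ, (ad K (Module.End K V) X).HasEigenvector
      ((n + 1 : ℕ) : K) (A ^ (n + 1)) :=
    fun n => ⟨Module.End.mem_eigenspace_iff.mpr (eigen n), fun h0 => hA ⟨n + 1, h0⟩⟩
  refine Module.Finite.not_linearIndependent_of_infinite _
    ((ad K _ X).eigenvectors_linearIndependent' _ ?_ _ hev)
  intro m n hmn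
  simpa using hmn

section LinearAlgebra

variable {K V W : Type*} [Field K] [AddCommGroup V] [Module K V] [AddCommGroup W] [Module K W]

theorem Submodule.disjoint_of_sup_eq_top_of_finrank_add_le [Module.Finite K V]
    {U U' : Submodule K V} (hsup : U ⊔ U' = ⊤)
    (hdim : finrank K U + finrank K U' ≤ finrank K V) : Disjoint U U' := by
  have h := Submodule.finrank_sup_add_finrank_inf_eq U U'
  rw [hsup, finrank_top] at h
  rw [disjoint_iff, ← Submodule.finrank_eq_zero]
  omega

theorem LinearMap.map_range_eq_range_of_finrank_ker_le [Module.Finite K V] [Module.Finite K W]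
    {T T' : V →ₗ[K] W} {N : W →ₗ[K] W} (hN : Function.Injective N)
    (hle : (range T).map N ≤ range T') (hker : finrank K (ker T) ≤ finrank K (ker T')) :
    (range T).map N = range T' := by
  refine Submodule.eq_of_le_of_finrank_le hle ?_
  rw [← (Submodule.equivMapOfInjective N hN (range T)).finrank_eq]
  have := finrank_range_add_finrank_ker T
  have := finrank_range_add_finrank_ker T'
  omega

end LinearAlgebra

namespace LieAlgebra

variable {F L : Type*} [Field F] [LieRing L] [LieAlgebra F L]

theorem finrank_ker_ad_lieEquiv_apply (φ : L ≃ₗ⁅F⁆ L) (a : L) :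
    finrank F (ker (ad F L (φ a))) = finrank F (ker (ad F L a)) := by
  suffices ker (ad F L (φ a)) = (ker (ad F L a)).map (φ.toLinearEquiv : L →ₗ[F] L) by
    rw [this, LinearEquiv.finrank_map_eq]
  ext y
  rw [Submodule.map_equiv_eq_comap_symm, Submodule.mem_comap, mem_ker, mem_ker, ad_apply,
    ad_apply]
  nth_rw 1 [← φ.apply_symm_apply y]
  rw [← LieEquiv.map_lie]
  exact φ.injective.eq_iff' (map_zero φ)

variable [CharZero F]

theorem isNilpotent_ad_of_lie_eq_self [Module.Finite F L] {x e : L} (h : ⁅x, e⁆ = e) :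
    IsNilpotent (ad F L e) :=
  Module.End.isNilpotent_of_lie_eq_self (X := ad F L x) (by rw [← LieHom.map_lie, h])

section Exp

variable [LieAlgebra ℚ L]

noncomputable def expAd (a : L) (ha : IsNilpotent (ad F L a)) : L ≃ₗ⁅F⁆ L :=
  LieDerivation.exp (LieDerivation.ad F L a) (by simpa using ha)

theorem expAd_apply {a y : L} (ha : IsNilpotent (ad F L a)) (hy : ⁅a, ⁅a, ⁅a, y⁆⁆⁆ = 0) :
    expAd a ha y = y + ⁅a, y⁆ + (2⁻¹ : F) • ⁅a, ⁅a, y⁆⁆ := by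
  rw [expAd, LieDerivation.exp_map_apply, LieDerivation.coe_ad_apply_eq_ad_apply,
    ← Module.End.smul_def, IsNilpotent.exp_smul_eq_sum (k := 3) _ ha]
  · simp [Finset.sum_range_succ, pow_succ, ← Rat.cast_smul_eq_qsmul F]
  · simpa [pow_succ] using hy

theorem exists_lieEquiv_apply_eq_neg_of_sl2 [Module.Finite F L] {e x f : L}
    (hxe : ⁅x, e⁆ = e) (hxf : ⁅x, f⁆ = -f) (hef : ⁅e, f⁆ = (2 : F) • x) :
    ∃ φ : L ≃ₗ⁅F⁆ L, φ f = -e := by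
  have hex : ⁅e, x⁆ = -e := by rw [← lie_skew, hxe]
  have hfx : ⁅-f, x⁆ = -f := by rw [← lie_skew, lie_neg, neg_neg, hxf]
  have hfe : ⁅-f, e⁆ = (2 : F) • x := by rw [← lie_skew, lie_neg, neg_neg, hef]
  have he : IsNilpotent (ad F L e) := isNilpotent_ad_of_lie_eq_self hxe
  have hf : IsNilpotent (ad F L (-f)) :=
    isNilpotent_ad_of_lie_eq_self (x := -x) (by rw [neg_lie, lie_neg, hxf, neg_neg])
  have hef' : expAd e he f = f + (2 : F) • x - e := by
    rw [expAd_apply he (by simp [hef, hex]), hef, lie_smul, hex]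
    module
  have hee : expAd e he e = e := by
    rw [expAd_apply he (by simp)]
    simp
  have hff : expAd (-f) hf f = f := by
    rw [expAd_apply hf (by simp)]
    simp
  have hfx' : expAd (-f) hf x = x - f := by
    rw [expAd_apply hf (by simp [hfx]), hfx, lie_self]
    module
  have hfe' : expAd (-f) hf e = e + (2 : F) • x - f := by
    rw [expAd_apply hf (by simp [hfe, hfx]), hfe, lie_smul, hfx]
    module
  refine ⟨(expAd e he).trans ((expAd (-f) hf).trans (expAd e he)), ?_⟩
  simp only [LieEquiv.trans_apply, hef', map_sub, map_add, map_smul, hff, hfx', hfe', hee]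
  module

end Exp

theorem finrank_ker_ad_eq_of_sl2 [Module.Finite F L] {e x f : L}
    (hxe : ⁅x, e⁆ = e) (hxf : ⁅x, f⁆ = -f) (hef : ⁅e, f⁆ = (2 : F) • x) :
    finrank F (ker (ad F L e)) = finrank F (ker (ad F L f)) := by
  let : Module ℚ L := Module.compHom L (algebraMap ℚ F)
  let : LieAlgebra ℚ L := { lie_smul := fun q a b => lie_smul (algebraMap ℚ F q) a b }
  obtain ⟨φ, hφ⟩ := exists_lieEquiv_apply_eq_neg_of_sl2 hxe hxf hef
  rw [← finrank_ker_ad_lieEquiv_apply φ f, hφ, map_neg, ker_neg]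

end LieAlgebra

/-- `pf` is `π_{[f,g]}` along `g^e`, `sg` is `(ad f)⁻¹ ∘ π_{[f,g]}` and `ps` inverts
`1 + (ad r) ∘ sg`, so that `Phi` is `Φ^{(r)}`. -/
theorem principal_slice_bracket_vanishes_general
    {F : Type*} [Field F] [CharZero F]
    {g : Type*} [LieRing g] [LieAlgebra F g] [Module.Finite F g]
    (e x f : g)
    (hxe : ⁅x, e⁆ = e) (hxf : ⁅x, f⁆ = -f) (hef : ⁅e, f⁆ = (2 : F) • x)
    (hprin : ∀ a : g,
      Module.finrank F (LinearMap.ker (LieAlgebra.ad F g f)) ≤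
        Module.finrank F (LinearMap.ker (LieAlgebra.ad F g a)))
    (B : LinearMap.BilinForm F g)
    (r : g)
    (pf sg ps : Module.End F g)
    (hpf1 : ∀ a : g, pf a ∈ LinearMap.range (LieAlgebra.ad F g f))
    (hpf2 : ∀ a : g, a - pf a ∈ LinearMap.ker (LieAlgebra.ad F g e))
    (hsg2 : ∀ a : g, ⁅f, sg a⁆ = pf a)
    (hps2 : ps * (1 + LieAlgebra.ad F g r * sg) = 1)
    (Phi : Module.End F g) (hPhi : Phi = (1 - pf) * ps) :
    ∀ p q : g, ⁅f, p⁆ = 0 → ⁅f, q⁆ = 0 → B p (Phi ⁅q, r⁆) = 0 := by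
  intro p q _ hfq
  have hdisj : Disjoint (ker (ad F g e)) (range (ad F g f)) := by
    refine Submodule.disjoint_of_sup_eq_top_of_finrank_add_le (eq_top_iff.mpr fun a _ =>
      Submodule.mem_sup.mpr ⟨a - pf a, hpf2 a, pf a, hpf1 a, sub_add_cancel a (pf a)⟩) ?_
    rw [finrank_ker_ad_eq_of_sl2 hxe hxf hef, add_comm]
    exact (finrank_range_add_finrank_ker (ad F g f)).le
  have hfix : ∀ u ∈ range (ad F g f), pf u = u := fun u hu =>
    (sub_eq_zero.mp (Submodule.disjoint_def.mp hdisj _ (hpf2 u)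
      (Submodule.sub_mem _ hu (hpf1 u)))).symm
  have hNinv : ∀ u, ps ((1 + ad F g r * sg) u) = u := fun u => congr($hps2 u)
  have hNrange : (range (ad F g f)).map (1 + ad F g r * sg) = range (ad F g (f + r)) := by
    refine map_range_eq_range_of_finrank_ker_le (Function.LeftInverse.injective hNinv) ?_
      (hprin (f + r))
    rintro _ ⟨u, hu, rfl⟩
    exact ⟨sg u, by simp [hsg2, hfix u hu]⟩
  obtain ⟨u, hu, hNu⟩ : ⁅q, r⁆ ∈ (range (ad F g f)).map (1 + ad F g r * sg) :=
    hNrange ▸ ⟨-q, by rw [ad_apply, lie_neg, add_lie, hfq, zero_add, ← lie_skew, neg_neg]⟩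
  rw [hPhi, Module.End.mul_apply, ← hNu, hNinv, LinearMap.sub_apply, Module.End.one_apply,
    hfix u hu, sub_self, map_zero]

/-- for `f` principal nilpotent (its centralizer has minimal possible
dimension), the induced Poisson bracket on the Slodowy slice vanishes:
`(p | Φ^{(r)}([q,r])) = 0` for all `p, q ∈ g^f` and `r ∈ g^e` (Kostant's theorem).
Here `Φ^{(r)} = π_{g^e}∘(1+(ad r)∘(ad f)^{-1}∘π_{[f,g]})^{-1}` is encoded via the
projection `pf` onto `[f,g]` along `g^e`, the map `sg = (ad f)^{-1}∘π_{[f,g]}`, and the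
two-sided inverse `ps` of `1 + (ad r) ∘ sg`. -/
theorem principal_slice_bracket_vanishes
    {F : Type*} [Field F] [CharZero F]
    {g : Type*} [LieRing g] [LieAlgebra F g] [Module.Finite F g]
    [LieAlgebra.IsSimple F g]
    (e x f : g)
    (hxe : ⁅x, e⁆ = e) (hxf : ⁅x, f⁆ = -f) (hef : ⁅e, f⁆ = (2 : F) • x)
    (hprin : ∀ a : g,
      Module.finrank F (LinearMap.ker (LieAlgebra.ad F g f)) ≤
        Module.finrank F (LinearMap.ker (LieAlgebra.ad F g a)))
    (B : LinearMap.BilinForm F g)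
    (hBsymm : ∀ a b : g, B a b = B b a)
    (hBinv : ∀ a b c : g, B ⁅a, b⁆ c = B a ⁅b, c⁆)
    (hBnd : B.Nondegenerate)
    (r : g) (hre : ⁅e, r⁆ = 0)
    (pf sg ps : Module.End F g)
    (hpf1 : ∀ a : g, pf a ∈ LinearMap.range (LieAlgebra.ad F g f))
    (hpf2 : ∀ a : g, a - pf a ∈ LinearMap.ker (LieAlgebra.ad F g e))
    (hsg1 : ∀ a : g, sg a ∈ LinearMap.range (LieAlgebra.ad F g e))
    (hsg2 : ∀ a : g, ⁅f, sg a⁆ = pf a)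
    (hps1 : (1 + LieAlgebra.ad F g r * sg) * ps = 1)
    (hps2 : ps * (1 + LieAlgebra.ad F g r * sg) = 1)
    (Phi : Module.End F g) (hPhi : Phi = (1 - pf) * ps) :
    ∀ p q : g, ⁅f, p⁆ = 0 → ⁅f, q⁆ = 0 → B p (Phi ⁅q, r⁆) = 0 :=
  principal_slice_bracket_vanishes_general e x f hxe hxf hef hprin B r pf sg ps hpf1 hpf2 hsg2 hps2
    Phi hPhi
end

section
/- Let g be a finite-dimensional simple Lie algebra with sl2-triple {e,h=2x,f}. If p, q ∈ g^f and either p or q lies in g^f_0 = g^f ∩ g_0, then for every r ∈ g^e the slice Poisson bracket satisfies {p,q}_S = [p,q], i.e., (p|Φ^{(r)}([q,r])) = ([p,q]|r). -/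
/-!
Let `ps = (1 + ad r ∘ sg)⁻¹`. Pairing with `p ∈ g^f` kills `[f, g]`, so
`{p, q}_S(r) = (p | ps [q, r])`. Splitting `[q, r] = ps [q, r] + [r, sg (ps [q, r])]` and using
invariance gives `(p | ps [q, r]) = ([p, q] | r) - ([p, r] | sg (ps [q, r]))`; the last term
vanishes when `[e, p] = 0`, because `sg` takes values in `[e, g]` and `g^e ⊥ [e, g]`. By
`sl₂`-theory, a vector of `g^f` of `ad x`-weight `0` lies in `g^e`. For `q ∈ g^f_0` one uses
instead that `(p | ps [q, r])` is antisymmetric in `p, q`, which follows from `sg` being skew for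
the form.
-/

lemma IsSl2Triple.lie_e_eq_zero_of_lie_f_eq_zero_of_lie_h_eq_zero
    (R : Type*) {L M : Type*} [CommRing R] [IsDomain R] [CharZero R] [LieRing L]
    [LieAlgebra R L] [AddCommGroup M] [Module R M] [LieRingModule L M] [LieModule R L M]
    [IsNoetherian R M] [Module.IsTorsionFree R M] {h e f : L} (t : IsSl2Triple h e f) {m : M}
    (hf : ⁅f, m⁆ = 0) (hh : ⁅h, m⁆ = 0) : ⁅e, m⁆ = 0 := by
  by_cases hm : m = 0
  · rw [hm, lie_zero]
  have P : t.symm.HasPrimitiveVectorWith m (0 : R) := ⟨hm, by simp [hh], hf⟩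
  simpa using P.pow_toEnd_f_eq_zero_of_eq_nat (n := 0) (by simp)

lemma lie_e_eq_zero_of_lie_f_eq_zero_of_lie_x_eq_zero {F g : Type*} [Field F] [CharZero F]
    [LieRing g] [LieAlgebra F g] [Module.Finite F g] {e x f : g}
    (hxe : ⁅x, e⁆ = e) (hxf : ⁅x, f⁆ = -f) (hef : ⁅e, f⁆ = (2 : F) • x) {p : g}
    (hfp : ⁅f, p⁆ = 0) (hxp : ⁅x, p⁆ = 0) : ⁅e, p⁆ = 0 := by
  by_cases hx : x = 0
  · rw [← hxe, hx, zero_lie, zero_lie]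
  have t : IsSl2Triple ((2 : F) • x) e f :=
    { h_ne_zero := smul_ne_zero two_ne_zero hx
      lie_e_f := hef
      lie_h_e_nsmul := by rw [smul_lie, hxe, two_smul, two_nsmul]
      lie_h_f_nsmul := by rw [smul_lie, hxf, two_smul, two_nsmul, neg_add] }
  exact t.lie_e_eq_zero_of_lie_f_eq_zero_of_lie_h_eq_zero F hfp (by rw [smul_lie, hxp, smul_zero])

section InvariantForm

variable {R g : Type*} [CommRing R] [LieRing g] [LieAlgebra R g] {B : LinearMap.BilinForm R g}

lemma apply_lie_eq_zero_of_lie_eq_zero (hBinv : ∀ a b c : g, B ⁅a, b⁆ c = B a ⁅b, c⁆)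
    {y a : g} (ha : ⁅y, a⁆ = 0) (z : g) : B a ⁅y, z⁆ = 0 := by
  rw [← hBinv, ← lie_skew, ha, neg_zero, map_zero, LinearMap.zero_apply]

lemma apply_sg_eq_neg_apply_sg (hBsymm : ∀ a b : g, B a b = B b a)
    (hBinv : ∀ a b c : g, B ⁅a, b⁆ c = B a ⁅b, c⁆) {e f : g} {pf sg : Module.End R g}
    (hpf : ∀ a : g, a - pf a ∈ LinearMap.ker (LieAlgebra.ad R g e))
    (hsg1 : ∀ a : g, sg a ∈ LinearMap.range (LieAlgebra.ad R g e))
    (hsg2 : ∀ a : g, ⁅f, sg a⁆ = pf a) (a b : g) : B a (sg b) = -B b (sg a) := by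
  have hproj : ∀ c d : g, B c (sg d) = B (pf c) (sg d) := fun c d => by
    obtain ⟨z, hz⟩ := hsg1 d
    have h := apply_lie_eq_zero_of_lie_eq_zero hBinv (hpf c) z
    rwa [← LieAlgebra.ad_apply R, hz, map_sub, LinearMap.sub_apply, sub_eq_zero] at h
  calc B a (sg b) = B ⁅f, sg a⁆ (sg b) := by rw [hproj, hsg2]
    _ = -B (sg a) ⁅f, sg b⁆ := by rw [← lie_skew, map_neg, LinearMap.neg_apply, hBinv]
    _ = -B b (sg a) := by rw [hsg2, hBsymm, ← hproj]

variable {sg ps : Module.End R g} {r : g}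

lemma apply_add_lie_sg_apply (hps : (1 + LieAlgebra.ad R g r * sg) * ps = 1) (v : g) :
    ps v + ⁅r, sg (ps v)⁆ = v := by
  simpa only [Module.End.mul_apply, LinearMap.add_apply, Module.End.one_apply,
    LieAlgebra.ad_apply] using LinearMap.congr_fun hps v

lemma apply_ps_lie (hBinv : ∀ a b c : g, B ⁅a, b⁆ c = B a ⁅b, c⁆)
    (hps : (1 + LieAlgebra.ad R g r * sg) * ps = 1) (p q : g) :
    B p (ps ⁅q, r⁆) = B ⁅p, q⁆ r - B ⁅p, r⁆ (sg (ps ⁅q, r⁆)) := by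
  have h : B p ⁅q, r⁆ = B p (ps ⁅q, r⁆) + B p ⁅r, sg (ps ⁅q, r⁆)⁆ := by
    rw [← map_add, apply_add_lie_sg_apply hps]
  rw [hBinv, hBinv, h, add_sub_cancel_right]

lemma apply_ps_lie_of_lie_eq_zero (hBinv : ∀ a b c : g, B ⁅a, b⁆ c = B a ⁅b, c⁆) {e : g}
    (hsg : ∀ a : g, sg a ∈ LinearMap.range (LieAlgebra.ad R g e))
    (hps : (1 + LieAlgebra.ad R g r * sg) * ps = 1) (hre : ⁅e, r⁆ = 0) {p : g}
    (hep : ⁅e, p⁆ = 0) (q : g) : B p (ps ⁅q, r⁆) = B ⁅p, q⁆ r := by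
  obtain ⟨z, hz⟩ := hsg (ps ⁅q, r⁆)
  have hepr : ⁅e, ⁅p, r⁆⁆ = 0 := by rw [leibniz_lie, hep, hre, zero_lie, lie_zero, add_zero]
  rw [apply_ps_lie hBinv hps, ← hz, LieAlgebra.ad_apply,
    apply_lie_eq_zero_of_lie_eq_zero hBinv hepr, sub_zero]

lemma apply_ps_lie_eq_neg (hBinv : ∀ a b c : g, B ⁅a, b⁆ c = B a ⁅b, c⁆)
    (hskew : ∀ a b : g, B a (sg b) = -B b (sg a))
    (hps : (1 + LieAlgebra.ad R g r * sg) * ps = 1) (p q : g) :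
    B p (ps ⁅q, r⁆) = -B q (ps ⁅p, r⁆) := by
  set m := ps ⁅q, r⁆
  set n := ps ⁅p, r⁆
  have hp : B ⁅p, r⁆ (sg m) = B n (sg m) + B r ⁅sg n, sg m⁆ := by
    rw [← apply_add_lie_sg_apply hps ⁅p, r⁆, map_add, LinearMap.add_apply, hBinv]
  have hq : B ⁅q, r⁆ (sg n) = B m (sg n) + B r ⁅sg m, sg n⁆ := by
    rw [← apply_add_lie_sg_apply hps ⁅q, r⁆, map_add, LinearMap.add_apply, hBinv]
  rw [apply_ps_lie hBinv hps, apply_ps_lie hBinv hps, hp, hq, hskew n m, ← lie_skew q p,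
    ← lie_skew (sg m), map_neg, map_neg, LinearMap.neg_apply]
  ring

lemma apply_one_sub_mul_apply (hBinv : ∀ a b c : g, B ⁅a, b⁆ c = B a ⁅b, c⁆) {f p : g}
    {pf : Module.End R g} (hsg : ∀ a : g, ⁅f, sg a⁆ = pf a) (hfp : ⁅f, p⁆ = 0) (v : g) :
    B p (((1 - pf) * ps) v) = B p (ps v) := by
  rw [Module.End.mul_apply, LinearMap.sub_apply, Module.End.one_apply, map_sub, ← hsg,
    apply_lie_eq_zero_of_lie_eq_zero hBinv hfp, sub_zero]

end InvariantForm

theorem slice_bracket_weight_one_general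
    {F : Type*} [Field F] [CharZero F]
    {g : Type*} [LieRing g] [LieAlgebra F g] [Module.Finite F g]
    (e x f : g)
    (hxe : ⁅x, e⁆ = e) (hxf : ⁅x, f⁆ = -f) (hef : ⁅e, f⁆ = (2 : F) • x)
    (B : LinearMap.BilinForm F g)
    (hBsymm : ∀ a b : g, B a b = B b a)
    (hBinv : ∀ a b c : g, B ⁅a, b⁆ c = B a ⁅b, c⁆)
    (r : g) (hre : ⁅e, r⁆ = 0)
    (pf sg ps : Module.End F g)
    (hpf2 : ∀ a : g, a - pf a ∈ LinearMap.ker (LieAlgebra.ad F g e))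
    (hsg1 : ∀ a : g, sg a ∈ LinearMap.range (LieAlgebra.ad F g e))
    (hsg2 : ∀ a : g, ⁅f, sg a⁆ = pf a)
    (hps1 : (1 + LieAlgebra.ad F g r * sg) * ps = 1)
    (Phi : Module.End F g) (hPhi : Phi = (1 - pf) * ps) :
    ∀ p q : g, ⁅f, p⁆ = 0 → ⁅f, q⁆ = 0 →
      (⁅x, p⁆ = 0 ∨ ⁅x, q⁆ = 0) →
      B p (Phi ⁅q, r⁆) = B ⁅p, q⁆ r := by
  intro p q hfp hfq hpq
  have hskew := apply_sg_eq_neg_apply_sg hBsymm hBinv hpf2 hsg1 hsg2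
  have he_of_weight_zero : ∀ {a : g}, ⁅f, a⁆ = 0 → ⁅x, a⁆ = 0 → ⁅e, a⁆ = 0 :=
    lie_e_eq_zero_of_lie_f_eq_zero_of_lie_x_eq_zero hxe hxf hef
  rw [hPhi, apply_one_sub_mul_apply hBinv hsg2 hfp]
  rcases hpq with hxp | hxq
  · exact apply_ps_lie_of_lie_eq_zero hBinv hsg1 hps1 hre (he_of_weight_zero hfp hxp) q
  · rw [apply_ps_lie_eq_neg hBinv hskew hps1,
      apply_ps_lie_of_lie_eq_zero hBinv hsg1 hps1 hre (he_of_weight_zero hfq hxq), ← lie_skew,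
      map_neg, LinearMap.neg_apply, neg_neg]

/-- if `p, q ∈ g^f` and either `p` or `q` lies in `g^f_0 = g^f ∩ g_0`,
then for every `r ∈ g^e` the slice Poisson bracket satisfies
`(p | Φ^{(r)}([q,r])) = ([p,q] | r)`, i.e. `{p,q}_S = [p,q]`. -/
theorem slice_bracket_weight_one
    {F : Type*} [Field F] [CharZero F]
    {g : Type*} [LieRing g] [LieAlgebra F g] [Module.Finite F g]
    [LieAlgebra.IsSimple F g]
    (e x f : g)
    (hxe : ⁅x, e⁆ = e) (hxf : ⁅x, f⁆ = -f) (hef : ⁅e, f⁆ = (2 : F) • x)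
    (B : LinearMap.BilinForm F g)
    (hBsymm : ∀ a b : g, B a b = B b a)
    (hBinv : ∀ a b c : g, B ⁅a, b⁆ c = B a ⁅b, c⁆)
    (hBnd : B.Nondegenerate)
    (r : g) (hre : ⁅e, r⁆ = 0)
    (pf sg ps : Module.End F g)
    (hpf1 : ∀ a : g, pf a ∈ LinearMap.range (LieAlgebra.ad F g f))
    (hpf2 : ∀ a : g, a - pf a ∈ LinearMap.ker (LieAlgebra.ad F g e))
    (hsg1 : ∀ a : g, sg a ∈ LinearMap.range (LieAlgebra.ad F g e))
    (hsg2 : ∀ a : g, ⁅f, sg a⁆ = pf a)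
    (hps1 : (1 + LieAlgebra.ad F g r * sg) * ps = 1)
    (hps2 : ps * (1 + LieAlgebra.ad F g r * sg) = 1)
    (Phi : Module.End F g) (hPhi : Phi = (1 - pf) * ps) :
    ∀ p q : g, ⁅f, p⁆ = 0 → ⁅f, q⁆ = 0 →
      (⁅x, p⁆ = 0 ∨ ⁅x, q⁆ = 0) →
      B p (Phi ⁅q, r⁆) = B ⁅p, q⁆ r :=
  slice_bracket_weight_one_general e x f hxe hxf hef B hBsymm hBinv r hre pf sg ps hpf2 hsg1 hsg2
    hps1 Phi hPhi
end

section
/- Let g be a finite-dimensional simple Lie algebra with sl2-triple {e,h=2x,f}, and let g_{1/2} be the 1/2-eigenspace of ad x. Then the skewsymmetric bilinear form ⟨a|b⟩ = -(f|[a,b]) on g_{1/2} is nondegenerate. -/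
/-!
Put `h = 2x`. If `a ∈ g_{1/2}` pairs trivially with `g_{1/2}`, then `u = ⁅f, a⁆` lies in the
`-1`-eigenspace of `ad h` and, by invariance, is `B`-orthogonal both to the `1`-eigenspace and to
the range of `ad h - 1`. These two subspaces span `g` because `h` acts without Jordan blocks on
every finite-dimensional representation of an `sl₂`-triple, so `u = 0`. Then `a` is a vector of
weight `-1` killed by `f`, which `sl₂`-theory rules out unless `a = 0`.

For the Jordan blocks: if `⁅h, v⁆ = μ v` and `⁅h, c⁆ = μ c + v` with `v ≠ 0`, a power of `e` makes
`v` primitive of weight `n ∈ ℕ`, and subtracting from `c` an `e`-preimage of `⁅e, c⁆` makes `c`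
killed by `e`. Then `e ^ (j + 1) (f ^ j c) = 0` for all `j`, yet `f ^ (n + 1) c ≠ 0` starts a
string of weight vectors whose last member `f ^ K c` is lowest of weight `-(2K - n)`, so that
`e ^ (K + 1)` cannot kill it.
-/

open LieModule

namespace IsSl2Triple

variable {F L M : Type*} [Field F] [LieRing L] [LieAlgebra F L]
  [AddCommGroup M] [Module F M] [LieRingModule L M] [LieModule F L M]
  {h e f : L} (t : IsSl2Triple h e f) {μ : F} {m v c : M}

local notation "ε" => toEnd F L M e
local notation "φ" => toEnd F L M f

include t

lemma exists_pow_toEnd_e_eq_zero [CharZero F] [Module.Finite F M] (hm : ⁅h, m⁆ = μ • m) :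
    ∃ j, (ε ^ j) m = 0 := by
  by_contra! hne
  have hinj : Function.Injective fun j : ℕ ↦ μ + 2 * j := fun i j hij ↦ by simpa using hij
  refine Module.Finite.not_linearIndependent_of_infinite _
    ((toEnd F L M h).eigenvectors_linearIndependent' _ hinj (fun j ↦ (ε ^ j) m) fun j ↦ ⟨?_, hne j⟩)
  rw [Module.End.mem_eigenspace_iff, toEnd_apply_apply]
  exact t.lie_h_pow_toEnd_e hm j

lemma lie_h_pow_toEnd_e_of_lie_h_eq_smul_add (hc : ⁅h, c⁆ = μ • c + v) (j : ℕ) :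
    ⁅h, (ε ^ j) c⁆ = (μ + 2 * j) • (ε ^ j) c + (ε ^ j) v := by
  induction j with
  | zero => simpa using hc
  | succ j ih =>
    rw [pow_succ', Module.End.mul_apply, Module.End.mul_apply, toEnd_apply_apply,
      toEnd_apply_apply, leibniz_lie, t.lie_h_e_smul F, smul_lie, ih, lie_add, lie_smul]
    push_cast
    module

lemma lie_h_pow_toEnd_f_of_lie_h_eq_smul_add (hc : ⁅h, c⁆ = μ • c + v) (j : ℕ) :
    ⁅h, (φ ^ j) c⁆ = (μ - 2 * j) • (φ ^ j) c + (φ ^ j) v := by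
  have hc' : ⁅-h, c⁆ = (-μ) • c + -v := by rw [neg_lie, hc, neg_smul, neg_add]
  have := t.symm.lie_h_pow_toEnd_e_of_lie_h_eq_smul_add hc' j
  rw [neg_lie, map_neg, neg_eq_iff_eq_neg] at this
  rw [this]
  module

lemma lie_e_pow_succ_toEnd_f_of_lie_h_eq_smul_add (hc : ⁅h, c⁆ = μ • c + v) (hce : ⁅e, c⁆ = 0)
    (j : ℕ) :
    ⁅e, (φ ^ (j + 1)) c⁆ = ((j + 1) * (μ - j)) • (φ ^ j) c + (j + 1 : F) • (φ ^ j) v := by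
  induction j with
  | zero => simp [leibniz_lie e, t.lie_e_f, hce, hc]
  | succ j ih =>
    rw [pow_succ', Module.End.mul_apply, toEnd_apply_apply, leibniz_lie, t.lie_e_f, ih,
      t.lie_h_pow_toEnd_f_of_lie_h_eq_smul_add hc, lie_add, lie_smul, lie_smul,
      ← toEnd_apply_apply F L M f, ← toEnd_apply_apply F L M f, ← Module.End.mul_apply,
      ← Module.End.mul_apply, ← pow_succ']
    push_cast
    module

lemma pow_succ_toEnd_e_pow_toEnd_f_eq_zero (hc : ⁅h, c⁆ = μ • c + v) (hce : ⁅e, c⁆ = 0)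
    (hv : ∀ j, (ε ^ (j + 1)) ((φ ^ j) v) = 0) (j : ℕ) : (ε ^ (j + 1)) ((φ ^ j) c) = 0 := by
  induction j with
  | zero => simpa using hce
  | succ j ih =>
    rw [pow_succ, Module.End.mul_apply, toEnd_apply_apply,
      t.lie_e_pow_succ_toEnd_f_of_lie_h_eq_smul_add hc hce, map_add, map_smul, map_smul, ih, hv,
      smul_zero, smul_zero, add_zero]

variable {t} in
lemma HasPrimitiveVectorWith.pow_toEnd_e_pow_toEnd_f_s19 (P : t.HasPrimitiveVectorWith m μ) (r : ℕ) :
    (ε ^ r) ((φ ^ r) m) = (∏ i ∈ Finset.range r, ((i + 1) * (μ - i))) • m := by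
  induction r with
  | zero => simp
  | succ r ih =>
    rw [pow_succ, Module.End.mul_apply, toEnd_apply_apply, P.lie_e_pow_succ_toEnd_f, map_smul, ih,
      smul_smul, Finset.prod_range_succ, mul_comm]

/-- Induction on the length of the `e`-string of `m`: its top `u` is primitive and
`e ^ (r + 1) (f ^ (r + 1) u)` is a nonzero multiple of `u`, so subtracting a multiple of
`⁅e, f ^ (r + 1) u⁆` from `m` shortens the string. -/
lemma exists_lie_e_eq_of_lie_h_eq_nat_smul [CharZero F] [Module.Finite F M] {k : ℕ} (hk : 0 < k)
    (hm : ⁅h, m⁆ = (k : F) • m) : ∃ d : M, ⁅h, d⁆ = ((k : F) - 2) • d ∧ ⁅e, d⁆ = m := by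
  obtain ⟨r, hr⟩ := t.exists_pow_toEnd_e_eq_zero hm
  induction r generalizing m with
  | zero => exact ⟨0, by simp, by simpa using hr.symm⟩
  | succ r ih =>
    by_cases hu : (ε ^ r) m = 0
    · exact ih hm hu
    have P : t.HasPrimitiveVectorWith ((ε ^ r) m) ((k : F) + 2 * r) := by
      refine ⟨hu, t.lie_h_pow_toEnd_e hm r, ?_⟩
      rwa [← toEnd_apply_apply F, ← Module.End.mul_apply, ← pow_succ']
    set C := ∏ i ∈ Finset.range (r + 1), ((i + 1) * ((k : F) + 2 * r - i))
    have hC : C ≠ 0 := Finset.prod_ne_zero_iff.mpr fun i hi ↦ by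
      rw [Finset.mem_range] at hi
      have : ((k + 2 * r - i : ℕ) : F) ≠ 0 := by norm_cast; omega
      push_cast [show i ≤ k + 2 * r by omega] at this
      exact mul_ne_zero (Nat.cast_add_one_ne_zero i) this
    set d₀ := (φ ^ (r + 1)) ((ε ^ r) m)
    have hd₀ : ⁅h, d₀⁆ = ((k : F) - 2) • d₀ := by
      rw [P.lie_h_pow_toEnd_f]; congr 1; push_cast; ring
    have hm' : ⁅h, m - C⁻¹ • ⁅e, d₀⁆⁆ = (k : F) • (m - C⁻¹ • ⁅e, d₀⁆) := by
      rw [lie_sub, lie_smul, hm, leibniz_lie, t.lie_h_e_smul F, hd₀, smul_lie, lie_smul]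
      module
    have hr' : (ε ^ r) (m - C⁻¹ • ⁅e, d₀⁆) = 0 := by
      rw [map_sub, map_smul, ← toEnd_apply_apply F, ← Module.End.mul_apply, ← pow_succ,
        P.pow_toEnd_e_pow_toEnd_f_s19, smul_smul, inv_mul_cancel₀ hC, one_smul, sub_self]
    obtain ⟨d₁, hd₁h, hd₁e⟩ := ih hm' hr'
    refine ⟨d₁ + C⁻¹ • d₀, ?_, ?_⟩
    · rw [lie_add, lie_smul, hd₁h, hd₀]
      module
    · rw [lie_add, lie_smul, hd₁e, sub_add_cancel]

variable {t} in
lemma HasPrimitiveVectorWith.lie_e_ne_zero_of_lie_h_eq_smul_add [CharZero F] [Module.Finite F M]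
    (P : t.HasPrimitiveVectorWith v μ) (hc : ⁅h, c⁆ = μ • c + v) : ⁅e, c⁆ ≠ 0 := by
  intro hce
  obtain ⟨n, rfl⟩ := P.exists_nat
  have hv_top : ∀ j, (ε ^ (j + 1)) ((φ ^ j) v) = 0 :=
    t.pow_succ_toEnd_e_pow_toEnd_f_eq_zero (by rw [P.lie_h, add_zero]) P.lie_e (by simp)
  have hc_top := t.pow_succ_toEnd_e_pow_toEnd_f_eq_zero hc hce hv_top
  have hv_bot (j : ℕ) : (φ ^ (j + (n + 1))) v = 0 := by
    rw [pow_add, Module.End.mul_apply, P.pow_toEnd_f_eq_zero_of_eq_nat rfl, map_zero]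
  -- `e` sends `f ^ (n + 1) c` to a nonzero multiple of the lowest vector `f ^ n v`
  have hw : (φ ^ (n + 1)) c ≠ 0 := by
    intro hw
    have := t.lie_e_pow_succ_toEnd_f_of_lie_h_eq_smul_add hc hce n
    rw [hw, lie_zero, sub_self, mul_zero, zero_smul, zero_add, eq_comm,
      smul_eq_zero_iff_right (Nat.cast_add_one_ne_zero n)] at this
    exact P.pow_toEnd_f_ne_zero_of_eq_nat rfl le_rfl this
  have hweight (j : ℕ) : ⁅-h, (φ ^ (j + (n + 1))) c⁆ =
      ((n + 2 + 2 * j : ℕ) : F) • (φ ^ (j + (n + 1))) c := by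
    rw [neg_lie, t.lie_h_pow_toEnd_f_of_lie_h_eq_smul_add hc, hv_bot, add_zero, ← neg_smul]
    congr 1
    push_cast
    ring
  have hchain : ∃ j, (φ ^ j) ((φ ^ (n + 1)) c) = 0 := by
    simpa using t.symm.exists_pow_toEnd_e_eq_zero (hweight 0)
  simp only [← Module.End.mul_apply, ← pow_add] at hchain
  obtain ⟨j, hj, hj1⟩ := Nat.exists_not_and_succ_of_not_zero_of_exists (by simpa using hw) hchain
  have P' : t.symm.HasPrimitiveVectorWith ((φ ^ (j + (n + 1))) c) ((n + 2 + 2 * j : ℕ) : F) := by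
    refine ⟨hj, hweight j, ?_⟩
    rwa [← toEnd_apply_apply F, ← Module.End.mul_apply, ← pow_succ', add_right_comm]
  exact P'.pow_toEnd_f_ne_zero_of_eq_nat rfl (i := j + n + 2) (by omega) (by
    simpa [add_assoc] using hc_top (j + (n + 1)))

theorem eq_zero_of_lie_h_eq_smul_add [CharZero F] [Module.Finite F M]
    (hv : ⁅h, v⁆ = μ • v) (hc : ⁅h, c⁆ = μ • c + v) : v = 0 := by
  by_contra hv0
  obtain ⟨j, hj, hj1⟩ := Nat.exists_not_and_succ_of_not_zero_of_exists
    (p := fun j ↦ (ε ^ j) v = 0) (by simpa using hv0) (t.exists_pow_toEnd_e_eq_zero hv)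
  have P : t.HasPrimitiveVectorWith ((ε ^ j) v) (μ + 2 * j) := by
    refine ⟨hj, t.lie_h_pow_toEnd_e hv j, ?_⟩
    rwa [← toEnd_apply_apply F, ← Module.End.mul_apply, ← pow_succ']
  obtain ⟨n, hn⟩ := P.exists_nat
  have hc' := t.lie_h_pow_toEnd_e_of_lie_h_eq_smul_add hc j
  rw [hn] at P hc'
  have he : ⁅h, ⁅e, (ε ^ j) c⁆⁆ = ((n + 2 : ℕ) : F) • ⁅e, (ε ^ j) c⁆ := by
    rw [leibniz_lie, t.lie_h_e_smul F, hc', lie_add, P.lie_e, lie_smul, smul_lie]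
    push_cast
    module
  obtain ⟨d, hdh, hde⟩ := t.exists_lie_e_eq_of_lie_h_eq_nat_smul (by omega) he
  have hcd : ⁅h, (ε ^ j) c - d⁆ = (n : F) • ((ε ^ j) c - d) + (ε ^ j) v := by
    rw [lie_sub, hc', hdh]
    push_cast
    module
  exact P.lie_e_ne_zero_of_lie_h_eq_smul_add hcd (by rw [lie_sub, hde, sub_self])

end IsSl2Triple

/-- As `ad h - μ` has no Jordan block, its kernel and range span `g`; invariance makes the
`-μ`-eigenspace orthogonal to that range. -/
theorem IsSl2Triple.eq_zero_of_forall_lie_h_eq_smul_imp_apply_eq_zero {F g : Type*} [Field F]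
    [CharZero F] [LieRing g] [LieAlgebra F g] [Module.Finite F g] {h e f : g}
    (t : IsSl2Triple h e f)
    {B : LinearMap.BilinForm F g} (hBinv : ∀ a b c : g, B ⁅a, b⁆ c = B a ⁅b, c⁆)
    (hB : B.SeparatingLeft) {μ : F} {u : g} (hu : ⁅h, u⁆ = -μ • u)
    (hperp : ∀ b : g, ⁅h, b⁆ = μ • b → B u b = 0) : u = 0 := by
  set T : Module.End F g := LieAlgebra.ad F g h - μ • 1
  have hT (z : g) : T z = ⁅h, z⁆ - μ • z := rfl
  have hdisj : Disjoint (LinearMap.ker T) (LinearMap.range T) := by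
    rw [Submodule.disjoint_def]
    rintro _ hv ⟨c, rfl⟩
    refine t.eq_zero_of_lie_h_eq_smul_add (c := c) ?_ (by rw [hT]; abel)
    rwa [LinearMap.mem_ker, hT, sub_eq_zero] at hv
  have htop : LinearMap.ker T ⊔ LinearMap.range T = ⊤ :=
    Submodule.eq_top_of_disjoint _ _ (T.finrank_range_add_finrank_ker.symm.trans (add_comm _ _)).le
      hdisj
  refine hB u fun w ↦ ?_
  obtain ⟨k, hk, _, ⟨c, rfl⟩, rfl⟩ := Submodule.mem_sup.mp (htop ▸ Submodule.mem_top (x := w))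
  rw [LinearMap.mem_ker, hT, sub_eq_zero] at hk
  have hu' : ⁅u, h⁆ = μ • u := by rw [← lie_skew, hu, neg_smul, neg_neg]
  rw [map_add, hperp k hk, hT, map_sub, map_smul, ← hBinv, hu', LinearMap.map_smul₂, sub_self,
    add_zero]

lemma isSl2Triple_two_smul {F g : Type*} [Field F] [CharZero F] [LieRing g] [LieAlgebra F g]
    {e x f : g} (hx : x ≠ 0) (hxe : ⁅x, e⁆ = e) (hxf : ⁅x, f⁆ = -f) (hef : ⁅e, f⁆ = (2 : F) • x) :
    IsSl2Triple ((2 : F) • x) e f where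
  h_ne_zero := smul_ne_zero two_ne_zero hx
  lie_e_f := hef
  lie_h_e_nsmul := by rw [smul_lie, hxe, ofNat_smul_eq_nsmul]
  lie_h_f_nsmul := by rw [smul_lie, hxf, smul_neg, ofNat_smul_eq_nsmul]

theorem neutral_form_on_half_eigenspace_nondegenerate_general
    {F : Type*} [Field F] [CharZero F]
    {g : Type*} [LieRing g] [LieAlgebra F g] [Module.Finite F g]
    (e x f : g)
    (hxe : ⁅x, e⁆ = e) (hxf : ⁅x, f⁆ = -f) (hef : ⁅e, f⁆ = (2 : F) • x)
    (B : LinearMap.BilinForm F g)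
    (hBinv : ∀ a b c : g, B ⁅a, b⁆ c = B a ⁅b, c⁆)
    (hBnd : B.Nondegenerate) :
    (∀ a b : g,
      a ∈ Module.End.eigenspace (LieAlgebra.ad F g x) ((1 : F) / 2) →
      b ∈ Module.End.eigenspace (LieAlgebra.ad F g x) ((1 : F) / 2) →
      -(B f ⁅a, b⁆) = B f ⁅b, a⁆) ∧
    (∀ a ∈ Module.End.eigenspace (LieAlgebra.ad F g x) ((1 : F) / 2),
      (∀ b ∈ Module.End.eigenspace (LieAlgebra.ad F g x) ((1 : F) / 2),
        -(B f ⁅a, b⁆) = 0) → a = 0) := by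
  have mem_iff (b : g) : b ∈ Module.End.eigenspace (LieAlgebra.ad F g x) ((1 : F) / 2) ↔
      ⁅(2 : F) • x, b⁆ = b := by
    rw [Module.End.mem_eigenspace_iff, LieAlgebra.ad_apply, smul_lie, one_div,
      eq_inv_smul_iff₀ two_ne_zero]
  refine ⟨fun a b _ _ ↦ by rw [← lie_skew a b, map_neg, neg_neg], fun a ha hab ↦ ?_⟩
  by_cases hx : x = 0
  · simpa [hx] using ((mem_iff a).mp ha).symm
  have t := isSl2Triple_two_smul hx hxe hxf hef
  have hfa : ⁅f, a⁆ = 0 := by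
    refine t.eq_zero_of_forall_lie_h_eq_smul_imp_apply_eq_zero hBinv hBnd.1 (μ := 1) ?_
      fun b hb ↦ ?_
    · rw [leibniz_lie, t.lie_lie_smul_f F, (mem_iff a).mp ha, neg_lie, smul_lie]
      module
    · rw [hBinv, ← neg_eq_zero]
      exact hab b ((mem_iff b).mpr (by rwa [one_smul] at hb))
  by_contra ha0
  have P : t.symm.HasPrimitiveVectorWith a (-1 : F) :=
    ⟨ha0, by rw [neg_lie, (mem_iff a).mp ha, neg_one_smul], hfa⟩
  obtain ⟨m, hm⟩ := P.exists_nat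
  exact Nat.cast_add_one_ne_zero (R := F) m (by rw [← hm]; ring)

/-- on `g_{1/2}` (the `1/2`-eigenspace of `ad x`), the bilinear form
`⟨a|b⟩ = -(f|[a,b])` is skewsymmetric and nondegenerate. -/
theorem neutral_form_on_half_eigenspace_nondegenerate
    {F : Type*} [Field F] [CharZero F]
    {g : Type*} [LieRing g] [LieAlgebra F g] [Module.Finite F g]
    [LieAlgebra.IsSimple F g]
    (e x f : g)
    (hxe : ⁅x, e⁆ = e) (hxf : ⁅x, f⁆ = -f) (hef : ⁅e, f⁆ = (2 : F) • x)
    (B : LinearMap.BilinForm F g)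
    (hBsymm : ∀ a b : g, B a b = B b a)
    (hBinv : ∀ a b c : g, B ⁅a, b⁆ c = B a ⁅b, c⁆)
    (hBnd : B.Nondegenerate) :
    (∀ a b : g,
      a ∈ Module.End.eigenspace (LieAlgebra.ad F g x) ((1 : F) / 2) →
      b ∈ Module.End.eigenspace (LieAlgebra.ad F g x) ((1 : F) / 2) →
      -(B f ⁅a, b⁆) = B f ⁅b, a⁆) ∧
    (∀ a ∈ Module.End.eigenspace (LieAlgebra.ad F g x) ((1 : F) / 2),
      (∀ b ∈ Module.End.eigenspace (LieAlgebra.ad F g x) ((1 : F) / 2),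
        -(B f ⁅a, b⁆) = 0) → a = 0) :=
  neutral_form_on_half_eigenspace_nondegenerate_general e x f hxe hxf hef B hBinv hBnd
end
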